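/- arXiv:2507.09832 — 6 statements merged into one kernel-verified Lean document; each statement's English description precedes it below -/
import Mathlib

section
/- If G is a simple graph on n ≥ 2 vertices, none of which is isolated, and with m edges, then for any positive integer k, the Ramsey number satisfies r(G, F_k) ≤ n + 2mk − 2m/n (an inequality of real numbers). -/
open SimpleGraph

/-- `host.ContainsCopy G` means that `host` contains a (not necessarily induced) subgraph
isomorphic to `G`. -/
def SimpleGraph.ContainsCopy {β α : Type*} (host : SimpleGraph β) (G : SimpleGraph α) : Prop :=
  ∃ f : α → β, Function.Injective f ∧ ∀ ⦃a b : α⦄, G.Adj a b → host.Adj (f a) (f b)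

/-- `ramseyProp G H N` means: for every red-blue coloring of the edges of the complete graph
on `N` vertices (given by its red graph `red`, the blue graph being the complement `redᶜ`),
there is a red copy of `G` or a blue copy of `H`. -/
def ramseyProp {α β : Type*} (G : SimpleGraph α) (H : SimpleGraph β) (N : ℕ) : Prop :=
  ∀ red : SimpleGraph (Fin N), red.ContainsCopy G ∨ (redᶜ).ContainsCopy H

/-- The Ramsey number `r(G, H)`: the least `N` with the Ramsey property. -/
noncomputable def ramseyNumber {α β : Type*} (G : SimpleGraph α) (H : SimpleGraph β) : ℕ :=
  sInf {N | ramseyProp G H N}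

/-- The fan `F_k = K_1 + k·K_2`: `k` triangles sharing exactly one common vertex (`none`). -/
def fan (k : ℕ) : SimpleGraph (Option (Fin k × Fin 2)) :=
  SimpleGraph.fromRel (fun x y => x = none ∨ ∃ i a b, x = some (i, a) ∧ y = some (i, b))

/-- `copies t G` is the disjoint union of `t` copies of `G`. -/
def copies {α : Type*} (t : ℕ) (G : SimpleGraph α) : SimpleGraph (Fin t × α) where
  Adj x y := x.1 = y.1 ∧ G.Adj x.2 y.2
  symm := ⟨fun _ _ h => ⟨h.1.symm, h.2.symm⟩⟩
  loopless := ⟨fun x h => G.loopless.irrefl x.2 h.2⟩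

/-!
Take a colouring of `K_N` with no red `G` and no blue `F_k`, where `N + 1 > n + 2mk - 2m/n`.
The red graph is `K_n`-free, so any `n` vertices span a blue edge; greedily, a blue neighbourhood
with at least `n + 2k - 2` vertices would contain `k` disjoint blue edges, i.e. a blue `F_k`.
Hence every blue degree is at most `n + 2k - 3`. Now induct on `n`: delete a vertex `u` of minimum
degree `δ ≤ 2m/n`, embed `G - u` in red by induction (its bound is smaller), and send `u` to a
vertex outside the image that is red to the images of its `δ` neighbours. Such a vertex exists
because `n - 1 + δ (n + 2k - 3) < N`, which is where `δ ≤ 2m/n` enters.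
-/

open Finset

universe u

namespace SimpleGraph

variable {V W : Type*}

lemma containsCopy_iff_isContained {H : SimpleGraph W} {G : SimpleGraph V} :
    H.ContainsCopy G ↔ G ⊑ H :=
  ⟨fun ⟨f, hf, hadj⟩ => ⟨⟨⟨f, fun h => hadj h⟩, hf⟩⟩,
    fun ⟨c⟩ => ⟨c, c.injective, fun _ _ h => c.toHom.map_adj h⟩⟩

lemma containsCopy_of_not_cliqueFree [Fintype V] (G : SimpleGraph V) {H : SimpleGraph W}
    (hH : ¬ H.CliqueFree (Fintype.card V)) : H.ContainsCopy G := by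
  obtain ⟨c⟩ := not_isEmpty_iff.1 (cliqueFree_iff.not.1 hH)
  rw [containsCopy_iff_isContained]
  exact (IsContained.of_le le_top).trans
    ((isContained_top_iff.2 ⟨(Fintype.equivFin V).toEmbedding⟩).trans ⟨c⟩)

variable {red : SimpleGraph W} {n : ℕ}

lemma exists_compl_adj_of_cliqueFree (hred : red.CliqueFree n) {A : Finset W} (hA : n ≤ #A) :
    ∃ x ∈ A, ∃ y ∈ A, redᶜ.Adj x y := by
  obtain ⟨s, hsA, hs⟩ := exists_subset_card_eq hA
  have hs : ¬ red.IsClique (s : Set W) := fun h => hred s ⟨h, hs⟩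
  simp only [IsClique, Set.Pairwise, not_forall, mem_coe] at hs
  obtain ⟨x, hx, y, hy, hxy, hnadj⟩ := hs
  exact ⟨x, hsA hx, y, hsA hy, (compl_adj red x y).2 ⟨hxy, hnadj⟩⟩

lemma exists_compl_matching_of_cliqueFree [DecidableEq W] (hred : red.CliqueFree n) :
    ∀ (k : ℕ) (A : Finset W), n + 2 * k ≤ #A + 2 →
      ∃ g : Fin k × Fin 2 → W, Function.Injective g ∧ (∀ p, g p ∈ A) ∧
        ∀ i, redᶜ.Adj (g (i, 0)) (g (i, 1))
  | 0, _, _ => ⟨fun p => p.1.elim0, fun p => p.1.elim0, fun p => p.1.elim0, fun i => i.elim0⟩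
  | k + 1, A, hA => by
    obtain ⟨x, hx, y, hy, hxy⟩ := exists_compl_adj_of_cliqueFree hred (A := A) (by omega)
    have hyx : y ∈ A.erase x := mem_erase.2 ⟨hxy.ne', hy⟩
    obtain ⟨g, hg, hgA, hgadj⟩ :=
      exists_compl_matching_of_cliqueFree hred k ((A.erase x).erase y) (by
        rw [card_erase_of_mem hyx, card_erase_of_mem hx]; omega)
    have hgx : ∀ p, g p ≠ x := fun p h => by simpa [h] using hgA p
    have hgy : ∀ p, g p ≠ y := fun p h => by simpa [h] using hgA p
    refine ⟨fun p => Fin.cases (![x, y] p.2) (fun i => g (i, p.2)) p.1, ?_, ?_, ?_⟩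
    · rintro ⟨i, a⟩ ⟨j, b⟩ h
      induction i using Fin.cases <;> induction j using Fin.cases
      · fin_cases a <;> fin_cases b <;> simp_all [hxy.ne, hxy.ne']
      · fin_cases a <;> simp [(hgx _).symm, (hgy _).symm] at h
      · fin_cases b <;> simp [hgx, hgy] at h
      · simpa using hg h
    · rintro ⟨i, a⟩
      induction i using Fin.cases
      · fin_cases a <;> simp [hx, hy]
      · simpa using (mem_erase.1 (mem_erase.1 (hgA _)).2).2
    · intro i
      induction i using Fin.cases
      · simpa using hxy
      · simpa using hgadj _

lemma containsCopy_fan {H : SimpleGraph W} {k : ℕ} (v : W) (g : Fin k × Fin 2 → W)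
    (hg : Function.Injective g) (hv : ∀ p, H.Adj v (g p))
    (hpair : ∀ i, H.Adj (g (i, 0)) (g (i, 1))) : H.ContainsCopy (fan k) := by
  have hpair' : ∀ i a b, a ≠ b → H.Adj (g (i, a)) (g (i, b)) := by
    intro i a b hab
    fin_cases a <;> fin_cases b
    exacts [absurd rfl hab, hpair i, (hpair i).symm, absurd rfl hab]
  have hrel : ∀ a b, a ≠ b → (a = none ∨ ∃ i c d, a = some (i, c) ∧ b = some (i, d)) →
      H.Adj (a.elim v g) (b.elim v g) := by
    rintro a b hab (rfl | ⟨i, c, d, rfl, rfl⟩)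
    · cases b with
      | none => exact absurd rfl hab
      | some q => exact hv q
    · exact hpair' i c d fun h => hab (by rw [h])
  refine ⟨fun o => o.elim v g, ?_, ?_⟩
  · rintro (_ | p) (_ | q) h
    exacts [rfl, absurd h (hv q).ne, absurd h (hv p).ne', congrArg some (hg h)]
  · intro a b hab
    rw [fan, fromRel_adj] at hab
    obtain ⟨hne, h | h⟩ := hab
    exacts [hrel a b hne h, (hrel b a hne.symm h).symm]

lemma card_neighborFinset_compl_add_three_le [Fintype W] [DecidableEq W] [DecidableRel red.Adj]
    {k : ℕ} (hred : red.CliqueFree n) (hfan : ¬ redᶜ.ContainsCopy (fan k)) (v : W) :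
    #(redᶜ.neighborFinset v) + 3 ≤ n + 2 * k := by
  by_contra! h
  obtain ⟨g, hg, hgA, hgadj⟩ :=
    exists_compl_matching_of_cliqueFree hred k (redᶜ.neighborFinset v) (by omega)
  exact hfan (containsCopy_fan v g hg (fun p => (mem_neighborFinset _ _ _).1 (hgA p)) hgadj)

lemma exists_notMem_forall_adj [Fintype W] [DecidableEq W] (H : SimpleGraph W)
    [DecidableRel H.Adj] {U S : Finset W} (hSU : S ⊆ U) {B : ℕ}
    (hB : ∀ w, #(Hᶜ.neighborFinset w) ≤ B) (hcard : #U + #S * B < Fintype.card W) :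
    ∃ x ∉ U, ∀ w ∈ S, H.Adj w x := by
  have hT : #(U ∪ S.biUnion (Hᶜ.neighborFinset ·)) < #(univ : Finset W) := calc
    _ ≤ #U + ∑ w ∈ S, #(Hᶜ.neighborFinset w) :=
      (card_union_le _ _).trans (by gcongr; exact card_biUnion_le)
    _ ≤ #U + #S * B := by gcongr; exact (sum_le_sum fun w _ => hB w).trans (by simp)
    _ < _ := by simpa using hcard
  obtain ⟨x, -, hx⟩ := exists_mem_notMem_of_card_lt_card hT
  simp only [mem_union, mem_biUnion, mem_neighborFinset, not_or, not_exists, not_and] at hx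
  refine ⟨x, hx.1, fun w hw => ?_⟩
  by_contra hwx
  exact hx.2 w hw ((compl_adj H w x).2 ⟨fun h => hx.1 (h ▸ hSU hw), hwx⟩)

lemma containsCopy_of_containsCopy_induce_compl_singleton [Fintype V] [DecidableEq V]
    [Fintype W] [DecidableEq W] {G : SimpleGraph V} [DecidableRel G.Adj] {H : SimpleGraph W}
    [DecidableRel H.Adj] {u : V} (hG : H.ContainsCopy (G.induce {u}ᶜ)) {B : ℕ}
    (hB : ∀ w, #(Hᶜ.neighborFinset w) ≤ B)
    (hcard : Fintype.card V - 1 + G.degree u * B < Fintype.card W) : H.ContainsCopy G := by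
  obtain ⟨f, hf, hadj⟩ := hG
  set S := ((G.neighborFinset u).subtype (· ∈ ({u}ᶜ : Set V))).image f
  have hU : #(univ.image f) ≤ Fintype.card V - 1 :=
    card_image_le.trans_eq (by rw [card_univ, Fintype.card_compl_set, Set.card_singleton])
  have hS : #S ≤ G.degree u :=
    card_image_le.trans ((card_subtype _ _).trans_le (card_filter_le _ _))
  obtain ⟨x, hxU, hxS⟩ := exists_notMem_forall_adj H (image_subset_image (subset_univ _)) hB
    (lt_of_le_of_lt (by gcongr) hcard)
  have hfx : ∀ v, f v ≠ x := fun v h => hxU (h ▸ mem_image_of_mem f (mem_univ v))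
  have hux : ∀ w (hw : G.Adj u w), H.Adj (f ⟨w, hw.ne'⟩) x := fun w hw =>
    hxS _ (mem_image_of_mem f (by simpa using hw))
  refine ⟨fun v => if h : v = u then x else f ⟨v, h⟩, ?_, ?_⟩
  · intro a b hab
    by_cases ha : a = u <;> by_cases hb : b = u
    · rw [ha, hb]
    · simp only [ha, hb, dite_true, dite_false] at hab
      exact absurd hab.symm (hfx _)
    · simp only [ha, hb, dite_true, dite_false] at hab
      exact absurd hab (hfx _)
    · simp only [ha, hb, dite_false] at hab
      exact congrArg Subtype.val (hf hab)
  · intro a b hab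
    by_cases ha : a = u <;> by_cases hb : b = u
    · exact absurd (ha.trans hb.symm) hab.ne
    · subst ha
      simpa [hb] using (hux b hab).symm
    · subst hb
      simpa [ha] using hux a hab.symm
    · simpa [ha, hb] using hadj (a := ⟨a, ha⟩) (b := ⟨b, hb⟩) hab

lemma card_mul_minDegree_le {V : Type*} [Fintype V] (G : SimpleGraph V) [DecidableRel G.Adj] :
    Fintype.card V * G.minDegree ≤ 2 * #G.edgeFinset := calc
  _ = ∑ _v : V, G.minDegree := by simp
  _ ≤ ∑ v, G.degree v := sum_le_sum fun v _ => G.minDegree_le_degree v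
  _ = _ := G.sum_degrees_eq_twice_card_edges

end SimpleGraph

noncomputable def fanBound (k n m : ℕ) : ℝ := n + 2 * m * k - 2 * m / n

section fanBound

variable {k : ℕ}

lemma fanBound_mono (hk : 1 ≤ k) (n : ℕ) : Monotone (fanBound k n) := by
  intro m m' h
  have hn : (2 : ℝ) / n ≤ 2 * k := by
    rcases n.eq_zero_or_pos with rfl | hn
    · simp
    · calc (2 : ℝ) / n ≤ 2 := div_le_self zero_le_two (by exact_mod_cast hn)
        _ ≤ 2 * k := by norm_cast; omega
  have hform : ∀ m, fanBound k n m = n + m * (2 * k - 2 / n) := fun m => by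
    unfold fanBound; ring
  rw [hform, hform]
  gcongr

/-- At `n = 0` the junk division gives `fanBound k 0 m' = 2m'k`, which may exceed
`fanBound k 1 m`; `hm'` forces `m' = 0` there. -/
lemma fanBound_le_fanBound_succ (hk : 1 ≤ k) {n m' m : ℕ} (hm : m' ≤ m)
    (hm' : m' ≤ n.choose 2) : fanBound k n m' ≤ fanBound k (n + 1) m := by
  rcases n.eq_zero_or_pos with rfl | hn
  · obtain rfl : m' = 0 := by simpa using hm'
    have hk' : (1 : ℝ) ≤ k := by exact_mod_cast hk
    simp only [fanBound]
    push_cast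
    nlinarith [(m.cast_nonneg : (0 : ℝ) ≤ m)]
  · refine (fanBound_mono hk n hm).trans ?_
    have : 2 * (m : ℝ) / (n + 1 : ℕ) ≤ 2 * m / n :=
      div_le_div_of_nonneg_left (by positivity) (by exact_mod_cast hn) (by simp)
    simp only [fanBound]
    push_cast at this ⊢
    linarith

lemma add_mul_lt_of_fanBound_succ_lt (hk : 1 ≤ k) {n m δ N : ℕ} (hδn : δ ≤ n)
    (hδ : (n + 1) * δ ≤ 2 * m) (hN : fanBound k (n + 1) m < N + 1) :
    n + δ * (n + 2 * k - 2) < N := by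
  have hk' : (1 : ℝ) ≤ k := by exact_mod_cast hk
  have hδ' : ((n : ℝ) + 1) * δ ≤ 2 * m := by exact_mod_cast hδ
  have key : (δ : ℝ) * (n + 2 * k - 2) ≤ 2 * m * k - 2 * m / (n + 1) := by
    rw [le_sub_iff_add_le, ← le_sub_iff_add_le', div_le_iff₀ (by positivity)]
    rcases n.eq_zero_or_pos with rfl | hn
    · obtain rfl : δ = 0 := by omega
      push_cast
      nlinarith [(m.cast_nonneg : (0 : ℝ) ≤ m)]
    · have hn' : (1 : ℝ) ≤ n := by exact_mod_cast hn
      nlinarith [mul_nonneg (mul_nonneg (m.cast_nonneg : (0 : ℝ) ≤ m) (sub_nonneg.2 hk'))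
        (sub_nonneg.2 hn'),
        mul_le_mul_of_nonneg_right hδ' (by linarith : (0 : ℝ) ≤ n + 2 * k - 2)]
  have : ((n + δ * (n + 2 * k - 2) : ℕ) : ℝ) < N := by
    simp only [fanBound] at hN
    rw [Nat.cast_add, Nat.cast_mul, Nat.cast_sub (by omega)]
    push_cast at hN ⊢
    linarith
  exact_mod_cast this

end fanBound

theorem ramseyProp_fan_of_fanBound_lt {k : ℕ} (hk : 1 ≤ k) (n : ℕ) :
    ∀ {V : Type u} [Fintype V] (G : SimpleGraph V), Fintype.card V = n →
      ∀ N : ℕ, fanBound k n G.edgeSet.ncard < N + 1 → ramseyProp G (fan k) N := by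
  induction n with
  | zero =>
    intro V _ G hV N _ red
    have : IsEmpty V := Fintype.card_eq_zero_iff.1 hV
    exact Or.inl ⟨isEmptyElim, fun a => isEmptyElim a, fun a => isEmptyElim a⟩
  | succ n ih =>
    intro V _ G hV N hN red
    classical
    by_contra! h
    obtain ⟨hred, hblue⟩ := h
    have hclique : red.CliqueFree (n + 1) := by
      by_contra h
      exact hred (containsCopy_of_not_cliqueFree G (hV ▸ h))
    have hB : ∀ w, #(redᶜ.neighborFinset w) ≤ n + 2 * k - 2 := fun w => by
      have := card_neighborFinset_compl_add_three_le hclique hblue w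
      omega
    have : Nonempty V := Fintype.card_pos_iff.1 (by omega)
    obtain ⟨u, hu⟩ := G.exists_minimal_degree_vertex
    have hV' : Fintype.card ↥({u}ᶜ : Set V) = n := by
      rw [Fintype.card_compl_set, Set.card_singleton, hV, Nat.add_sub_cancel]
    have hm : G.edgeSet.ncard = #G.edgeFinset := Set.ncard_eq_toFinset_card' _
    have hm' : (G.induce {u}ᶜ).edgeSet.ncard = #G.edgeFinset - G.degree u := by
      rw [Set.ncard_eq_toFinset_card', ← card_edgeFinset_deleteIncidenceSet,
        ← card_edgeFinset_induce_compl_singleton]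
      rfl
    have hbound :
        fanBound k n (G.induce {u}ᶜ).edgeSet.ncard ≤ fanBound k (n + 1) G.edgeSet.ncard := by
      refine fanBound_le_fanBound_succ hk (hm' ▸ hm ▸ Nat.sub_le _ _) ?_
      rw [Set.ncard_eq_toFinset_card', ← hV']
      exact card_edgeFinset_le_card_choose_two
    rcases ih (G.induce {u}ᶜ) hV' N (hbound.trans_lt hN) red with hcopy | hfan
    · refine hred (containsCopy_of_containsCopy_induce_compl_singleton hcopy hB ?_)
      rw [hV, Fintype.card_fin, Nat.add_sub_cancel]
      exact add_mul_lt_of_fanBound_succ_lt hk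
        (Nat.lt_succ_iff.1 ((G.degree_lt_card_verts u).trans_eq hV))
        (hV ▸ hu ▸ G.card_mul_minDegree_le) (hm ▸ hN)
    · exact hblue hfan

theorem ramsey_fan_upper_general {V : Type*} [Fintype V] (n m k : ℕ) (hk : 1 ≤ k)
    (G : SimpleGraph V) (hcard : Fintype.card V = n) (hm : G.edgeSet.ncard = m) :
    (ramseyNumber G (fan k) : ℝ) ≤ (n : ℝ) + 2 * (m : ℝ) * (k : ℝ) - 2 * (m : ℝ) / (n : ℝ) := by
  have hB : 0 ≤ fanBound k n m :=
    (by simp [fanBound] : (0 : ℝ) ≤ fanBound k n 0).trans (fanBound_mono hk n (Nat.zero_le m))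
  have hR : ramseyProp G (fan k) ⌊fanBound k n m⌋₊ :=
    ramseyProp_fan_of_fanBound_lt hk n G hcard _ (hm ▸ Nat.lt_floor_add_one _)
  calc (ramseyNumber G (fan k) : ℝ) ≤ ⌊fanBound k n m⌋₊ := mod_cast Nat.sInf_le hR
    _ ≤ fanBound k n m := Nat.floor_le hB

/-- Lemma 9: if `G` is a simple graph on `n ≥ 2` vertices none of which is isolated and
with `m` edges, then `r(G, F_k) ≤ n + 2mk − 2m/n`. -/
theorem ramsey_fan_upper {V : Type*} [Fintype V] (n m k : ℕ) (hk : 1 ≤ k) (hn : 2 ≤ n)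
    (G : SimpleGraph V) (hcard : Fintype.card V = n) (hm : G.edgeSet.ncard = m)
    (hiso : ∀ v : V, ∃ w : V, G.Adj v w) :
    (ramseyNumber G (fan k) : ℝ) ≤ (n : ℝ) + 2 * (m : ℝ) * (k : ℝ) - 2 * (m : ℝ) / (n : ℝ) :=
  ramsey_fan_upper_general n m k hk G hcard hm
end

section
/- If G is a simple graph on n ≥ 2 vertices, none of which is isolated, and with m edges, then for any positive integers k and t, the Ramsey number satisfies r(G, tF_k) ≤ n + 2mk − 2m/n + (t − 1)(2k + 1) (an inequality of real numbers). -/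
open SimpleGraph

/-!
Let `B` be the blue graph, `n = |G|`, `m = e(G)` and `c = ⌈2m/n⌉`, and assume there is no red `G`.
It suffices to find a blue `F_k` inside every vertex set `S` with `|S| ≥ n + 2mk - c`: removing
it and repeating gives `t` disjoint fans among `n + 2mk - c + (t - 1)(2k + 1)` vertices.
Take `u ∈ S` of maximal blue degree `b` inside `S`. Either the blue neighbourhood of `u` in `S`
carries a blue matching of size `k`, which together with `u` is a blue `F_k`, or it contains a
blue-independent, i.e. red-complete, set `W` with `b ≤ |W| + 2k - 2`. In that case `G` embeds in
red greedily, its vertices taken in order of decreasing degree: the first `|W|` go into `W`, and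
the `(j+1)`-st vertex has at most `t ≤ 2m/(j+1)` earlier neighbours, so the `j` used vertices and
the at most `t b` blue neighbours of their images leave a free vertex of `S`.
-/

open Finset Function

namespace SimpleGraph

variable {α β V : Type*}

def ContainsCopyIn (host : SimpleGraph β) (G : SimpleGraph α) (S : Set β) : Prop :=
  ∃ f : α → β, Injective f ∧ (∀ ⦃a b : α⦄, G.Adj a b → host.Adj (f a) (f b)) ∧ ∀ a, f a ∈ S

theorem ContainsCopyIn.containsCopy {B : SimpleGraph β} {H : SimpleGraph α} {S : Set β}
    (h : B.ContainsCopyIn H S) : B.ContainsCopy H :=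
  let ⟨f, hf, hadj, _⟩ := h; ⟨f, hf, hadj⟩

theorem containsCopyIn_copies [Fintype α] [DecidableEq β] {B : SimpleGraph β}
    {H : SimpleGraph α} {N : ℕ} (t : ℕ) {S : Finset β}
    (h : ∀ S' ⊆ S, N ≤ #S' → B.ContainsCopyIn H S')
    (hS : N + t * Fintype.card α ≤ #S + Fintype.card α) :
    B.ContainsCopyIn (copies t H) S := by
  induction t generalizing S with
  | zero => exact ⟨isEmptyElim, fun p => isEmptyElim p, fun p => isEmptyElim p, isEmptyElim⟩
  | succ t ih =>
    rw [add_one_mul] at hS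
    obtain ⟨f, hf, hfadj, hfS⟩ := h S subset_rfl (by omega)
    have hcard : #S ≤ #(S \ univ.image f) + Fintype.card α := by
      simpa [card_image_of_injective _ hf] using
        card_le_card_sdiff_add_card (s := S) (t := univ.image f)
    obtain ⟨g, hg, hgadj, hgS⟩ :=
      ih (S := S \ univ.image f) (fun S' hS' => h S' (hS'.trans sdiff_subset)) (by omega)
    have hfg : ∀ a p, f a ≠ g p := fun a p heq =>
      (mem_sdiff.1 (hgS p)).2 (heq ▸ mem_image_of_mem f (mem_univ a))
    refine ⟨fun p => (Fin.cons f (curry g) : Fin (t + 1) → α → β) p.1 p.2, ?_, ?_, ?_⟩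
    · rintro ⟨i, a⟩ ⟨i', a'⟩ heq
      cases i using Fin.cases <;> cases i' using Fin.cases <;>
        simp only [Fin.cons_zero, Fin.cons_succ, curry] at heq
      · rw [hf heq]
      · exact (hfg _ _ heq).elim
      · exact (hfg _ _ heq.symm).elim
      · cases hg heq; rfl
    · rintro ⟨i, a⟩ ⟨i', a'⟩ ⟨rfl, h⟩
      cases i using Fin.cases
      · exact hfadj h
      · exact hgadj ⟨rfl, h⟩
    · rintro ⟨i, a⟩
      cases i using Fin.cases
      · exact hfS a
      · exact (mem_sdiff.1 (hgS _)).1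

theorem containsCopyIn_top_of_adj {B : SimpleGraph β} {S : Set β} {x y : β} (hx : x ∈ S)
    (hy : y ∈ S) (hxy : B.Adj x y) : B.ContainsCopyIn (⊤ : SimpleGraph (Fin 2)) S := by
  refine ⟨![x, y], ?_, ?_, ?_⟩
  · intro a b hab
    fin_cases a <;> fin_cases b <;> simp_all [hxy.ne, hxy.ne']
  · intro a b hab
    fin_cases a <;> fin_cases b <;> simp_all [hxy.symm]
  · intro a
    fin_cases a <;> simpa

theorem containsCopyIn_copies_top_or_isIndepSet [DecidableEq β] (B : SimpleGraph β)
    (S : Finset β) (q : ℕ) :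
    B.ContainsCopyIn (copies q (⊤ : SimpleGraph (Fin 2))) S ∨
      ∃ W ⊆ S, B.IsIndepSet W ∧ #S + 2 ≤ #W + 2 * q := by
  -- If every independent subset of `S` is small, every large subset carries an edge, and disjoint
  -- edges can then be picked one at a time.
  by_contra! ⟨hcopy, hW⟩
  have hq : 2 * q < #S + 2 := by simpa using hW ∅ (empty_subset _) (by simp)
  refine hcopy <| containsCopyIn_copies (N := #S + 2 - 2 * q) q (fun S' hS' hN => ?_)
    (by rw [Fintype.card_fin]; omega)
  by_contra hedge
  have := hW S' hS' fun x hx y hy _ hxy => hedge (containsCopyIn_top_of_adj hx hy hxy)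
  omega

theorem containsCopyIn_fan {B : SimpleGraph β} {k : ℕ} {S : Set β} {u : β} (hu : u ∈ S)
    (h : B.ContainsCopyIn (copies k (⊤ : SimpleGraph (Fin 2))) (B.neighborSet u ∩ S)) :
    B.ContainsCopyIn (fan k) S := by
  obtain ⟨f, hf, hfadj, hfS⟩ := h
  simp only [Set.mem_inter_iff, mem_neighborSet] at hfS
  refine ⟨fun x => x.elim u f, ?_, ?_, ?_⟩
  · rintro (_ | p) (_ | q) h <;> simp only [Option.elim_none, Option.elim_some] at h
    · rfl
    · exact ((hfS q).1.ne h).elim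
    · exact ((hfS p).1.ne h.symm).elim
    · rw [hf h]
  · rintro (_ | p) (_ | q) h <;> simp only [fan, fromRel_adj] at h
    · exact (h.1 rfl).elim
    · exact (hfS q).1
    · exact (hfS p).1.symm
    · obtain ⟨hne, (⟨⟨⟩⟩ | ⟨i, a, b, ⟨⟩, ⟨⟩⟩) | (⟨⟨⟩⟩ | ⟨i, a, b, ⟨⟩, ⟨⟩⟩)⟩ := h
      all_goals exact hfadj ⟨rfl, fun hab => hne (congrArg (some <| Prod.mk i ·) hab)⟩
  · rintro (_ | p)
    · exact hu
    · exact (hfS p).2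

section DegreeOrder

variable [Fintype V] (G : SimpleGraph V) [DecidableRel G.Adj]

def IsHighDegreeSet (D : Finset V) : Prop :=
  ∀ u ∈ D, ∀ v ∉ D, G.degree v ≤ G.degree u

variable {G}

theorem IsHighDegreeSet.exists_insert [DecidableEq V] {D : Finset V} (hD : G.IsHighDegreeSet D)
    (hne : D ≠ univ) : ∃ v ∉ D, G.IsHighDegreeSet (insert v D) := by
  obtain ⟨v, hv, hmax⟩ := exists_max_image Dᶜ (G.degree ·)
    (nonempty_iff_ne_empty.2 ((compl_eq_empty_iff D).not.2 hne))
  rw [mem_compl] at hv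
  refine ⟨v, hv, ?_⟩
  rintro u hu w hw
  rw [mem_insert, not_or] at hw
  rcases mem_insert.1 hu with rfl | hu
  · exact hmax w (mem_compl.2 hw.2)
  · exact hD u hu w hw.2

theorem exists_isHighDegreeSet [DecidableEq V] {j : ℕ} (hj : j ≤ Fintype.card V) :
    ∃ D : Finset V, #D = j ∧ G.IsHighDegreeSet D := by
  induction j with
  | zero => exact ⟨∅, rfl, fun _ h => absurd h (notMem_empty _)⟩
  | succ j ih =>
    obtain ⟨D, rfl, hD⟩ := ih (by omega)
    obtain ⟨v, hv, hD'⟩ := hD.exists_insert (by rintro rfl; simp at hj)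
    exact ⟨insert v D, card_insert_of_notMem hv, hD'⟩

theorem IsHighDegreeSet.card_add_one_mul_degree_le {D : Finset V} (hD : G.IsHighDegreeSet D)
    {v : V} (hv : v ∉ D) : (#D + 1) * G.degree v ≤ 2 * #G.edgeFinset := by
  classical
  rw [← sum_degrees_eq_twice_card_edges, ← card_insert_of_notMem hv, ← smul_eq_mul, ← sum_const]
  calc ∑ _ ∈ insert v D, G.degree v ≤ ∑ u ∈ insert v D, G.degree u := by
        refine sum_le_sum fun u hu => ?_
        rcases mem_insert.1 hu with rfl | hu
        · rfl
        · exact hD u hu v hv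
    _ ≤ ∑ u, G.degree u := sum_le_univ_sum_of_nonneg fun _ => Nat.zero_le _

end DegreeOrder

structure IsPartialCopy (G : SimpleGraph V) (R : SimpleGraph β) (D : Set V) (S : Set β)
    (φ : V → β) : Prop where
  injOn : Set.InjOn φ D
  mapsTo : Set.MapsTo φ D S
  map_adj : ∀ ⦃a⦄, a ∈ D → ∀ ⦃b⦄, b ∈ D → G.Adj a b → R.Adj (φ a) (φ b)

namespace IsPartialCopy

variable {G : SimpleGraph V} {R : SimpleGraph β} {D : Set V} {S : Set β} {φ : V → β}

theorem mono {S' : Set β} (hφ : IsPartialCopy G R D S φ) (hS : S ⊆ S') :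
    IsPartialCopy G R D S' φ :=
  ⟨hφ.injOn, hφ.mapsTo.mono_right hS, hφ.map_adj⟩

theorem containsCopy (hφ : IsPartialCopy G R Set.univ S φ) : R.ContainsCopy G :=
  ⟨φ, Set.injOn_univ.1 hφ.injOn, fun _ _ => hφ.map_adj trivial trivial⟩

theorem extend [DecidableEq V] (hφ : IsPartialCopy G R D S φ) {v : V} (hv : v ∉ D) {x : β}
    (hxS : x ∈ S) (hx : x ∉ φ '' D) (hadj : ∀ u ∈ D, G.Adj v u → R.Adj x (φ u)) :
    IsPartialCopy G R (insert v D) S (update φ v x) := by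
  have heq : Set.EqOn (update φ v x) φ D := fun u hu =>
    update_of_ne (ne_of_mem_of_not_mem hu hv) _ _
  refine ⟨(Set.injOn_insert hv).2 ⟨hφ.injOn.congr heq.symm, ?_⟩, ?_, ?_⟩
  · rwa [update_self, heq.image_eq]
  · rintro u (rfl | hu)
    · rwa [update_self]
    · rw [heq hu]; exact hφ.mapsTo hu
  · rintro a (rfl | ha) b (rfl | hb) hab
    · exact (hab.ne rfl).elim
    · rw [update_self, heq hb]; exact hadj b hb hab
    · rw [update_self, heq ha]; exact (hadj a ha hab.symm).symm
    · rw [heq ha, heq hb]; exact hφ.map_adj ha hb hab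

end IsPartialCopy

theorem exists_isPartialCopy_of_isClique [DecidableEq V] [DecidableEq β] [Nonempty β]
    (G : SimpleGraph V) {R : SimpleGraph β} {W : Finset β} (hW : R.IsClique (W : Set β))
    (D : Finset V) (hD : #D ≤ #W) : ∃ φ, IsPartialCopy G R D W φ := by
  induction D using Finset.induction_on with
  | empty => exact ⟨fun _ => Classical.arbitrary β, by simp, by simp [Set.MapsTo], by simp⟩
  | insert v D hv ih =>
    rw [card_insert_of_notMem hv] at hD
    obtain ⟨φ, hφ⟩ := ih (by omega)
    obtain ⟨x, hx⟩ : (W \ D.image φ).Nonempty := by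
      rw [← card_pos]
      have := card_le_card_sdiff_add_card (s := W) (t := D.image φ)
      have := card_image_le (s := D) (f := φ)
      omega
    rw [mem_sdiff, mem_image, not_exists] at hx
    rw [coe_insert]
    refine ⟨update φ v x, hφ.extend hv hx.1 ?_ fun u hu _ => hW hx.1 (hφ.mapsTo hu) ?_⟩
    · rintro ⟨u, hu, rfl⟩; exact hx.2 u ⟨hu, rfl⟩
    · rintro rfl; exact hx.2 u ⟨hu, rfl⟩

theorem IsPartialCopy.exists_insert_compl [DecidableEq V] [Fintype β] [DecidableEq β]
    {G : SimpleGraph V} [DecidableRel G.Adj] {B : SimpleGraph β} [DecidableRel B.Adj]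
    {D : Finset V} {S : Finset β} {φ : V → β} (hφ : IsPartialCopy G Bᶜ D S φ) {v : V}
    (hv : v ∉ D) {b : ℕ}
    (hb : ∀ x ∈ S, #(B.neighborFinset x ∩ S) ≤ b)
    (hroom : #D + #{u ∈ D | G.Adj v u} * b < #S) :
    ∃ x, IsPartialCopy G Bᶜ (insert v D : Finset V) S (update φ v x) := by
  set blocked := D.image φ ∪ {u ∈ D | G.Adj v u}.biUnion fun u => B.neighborFinset (φ u) ∩ S
  have hblocked : #blocked ≤ #D + #{u ∈ D | G.Adj v u} * b :=
    (card_union_le _ _).trans <| add_le_add card_image_le <|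
      card_biUnion_le_card_mul _ _ _ fun u hu => hb _ (hφ.mapsTo (mem_filter.1 hu).1)
  obtain ⟨x, hx⟩ : (S \ blocked).Nonempty := by
    rw [← card_pos]
    have := card_le_card_sdiff_add_card (s := S) (t := blocked)
    omega
  simp only [blocked, mem_sdiff, mem_union, mem_image, mem_biUnion, mem_filter, mem_inter,
    mem_neighborFinset, not_or, not_exists, not_and] at hx
  refine ⟨x, ?_⟩
  rw [coe_insert]
  refine hφ.extend hv hx.1 (fun ⟨u, hu, hux⟩ => hx.2.1 u hu hux) fun u hu huv => ?_
  rw [compl_adj]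
  exact ⟨fun hux => hx.2.1 u hu hux.symm, fun hux => hx.2.2 u ⟨hu, huv⟩ hux.symm hx.1⟩

theorem containsCopy_compl_of_room [Fintype V] [DecidableEq V] [Fintype β] [DecidableEq β]
    [Nonempty β] {G : SimpleGraph V} [DecidableRel G.Adj] {B : SimpleGraph β}
    [DecidableRel B.Adj]
    {S W : Finset β} (hWS : W ⊆ S) (hW : B.IsIndepSet W) {b : ℕ}
    (hb : ∀ x ∈ S, #(B.neighborFinset x ∩ S) ≤ b)
    (hroom : ∀ j t, #W ≤ j → j < Fintype.card V → t ≤ j → t * (j + 1) ≤ 2 * #G.edgeFinset →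
      j + t * b < #S) :
    Bᶜ.ContainsCopy G := by
  have key : ∀ j, min #W (Fintype.card V) ≤ j → j ≤ Fintype.card V →
      ∃ (D : Finset V) (φ : V → β), #D = j ∧ G.IsHighDegreeSet D ∧ IsPartialCopy G Bᶜ D S φ := by
    intro j hj
    induction j, hj using Nat.le_induction with
    | base =>
      intro _
      obtain ⟨D, hDcard, hD⟩ := G.exists_isHighDegreeSet (min_le_right #W _)
      obtain ⟨φ, hφ⟩ :=
        exists_isPartialCopy_of_isClique G ((isClique_compl B).2 hW) D (by omega)
      exact ⟨D, φ, hDcard, hD, hφ.mono (coe_subset.2 hWS)⟩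
    | succ j hj ih =>
      intro hjn
      obtain ⟨D, φ, rfl, hD, hφ⟩ := ih (by omega)
      obtain ⟨v, hv, hD'⟩ := hD.exists_insert (by rintro rfl; simp at hjn)
      have hdeg : #{u ∈ D | G.Adj v u} ≤ G.degree v := by
        rw [← card_neighborFinset_eq_degree]
        exact card_le_card fun u hu => (mem_neighborFinset _ _ _).2 (mem_filter.1 hu).2
      obtain ⟨x, hx⟩ := hφ.exists_insert_compl hv hb <| hroom _ _ (by omega) (by omega)
        (card_le_card (filter_subset _ _))
        ((Nat.mul_le_mul_right _ hdeg).trans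
          (mul_comm (#D + 1) _ ▸ hD.card_add_one_mul_degree_le hv))
      exact ⟨insert v D, update φ v x, card_insert_of_notMem hv, hD', hx⟩
  obtain ⟨D, φ, hcard, -, hφ⟩ := key _ (min_le_right _ _) le_rfl
  rw [card_eq_iff_eq_univ] at hcard
  subst hcard
  exact (coe_univ (α := V) ▸ hφ).containsCopy

end SimpleGraph

open SimpleGraph

-- `j` vertices are embedded and the next one has `t` embedded neighbours (`t (j + 1) ≤ 2m` by the
-- degree order); `b` bounds blue degrees and `c = ⌈2m/n⌉`.
theorem greedy_room_bound {n m k c j t b : ℕ} (hk : 1 ≤ k) (hj : j < n) (htj : t ≤ j)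
    (hdeg : t * (j + 1) ≤ 2 * m) (hb : b + 2 ≤ j + 2 * k)
    (hc : 2 * m ≤ n * c) (hc' : n * c < 2 * m + n) :
    j + t * b + c < n + 2 * m * k := by
  have hcm : c ≤ 2 * m := by nlinarith
  rcases Nat.eq_zero_or_pos t with rfl | ht
  · nlinarith
  have htm : t ≤ m := by nlinarith
  rcases hk.eq_or_lt with rfl | hk2
  · rcases le_or_gt c t with hct | htc
    · nlinarith
    · -- here `t b ≤ (c - 1)(n - 1) ≤ 2m - c`
      have : t * b ≤ (c - 1) * (n - 1) := Nat.mul_le_mul (by omega) (by omega)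
      zify [show 1 ≤ c by omega, show 1 ≤ n by omega] at this
      push_cast at *
      nlinarith
  · nlinarith

theorem containsCopy_compl_or_containsCopyIn_fan {V β : Type*} [Fintype V] [DecidableEq V]
    [Nonempty V] [Fintype β] [DecidableEq β] (G : SimpleGraph V) [DecidableRel G.Adj]
    (B : SimpleGraph β) [DecidableRel B.Adj] {k c : ℕ} (hk : 1 ≤ k)
    (hc : 2 * #G.edgeFinset ≤ Fintype.card V * c)
    (hc' : Fintype.card V * c < 2 * #G.edgeFinset + Fintype.card V) {S : Finset β}
    (hS : Fintype.card V + 2 * #G.edgeFinset * k ≤ #S + c) :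
    Bᶜ.ContainsCopy G ∨ B.ContainsCopyIn (fan k) S := by
  have hSne : S.Nonempty := by
    rw [← card_pos]
    nlinarith [Fintype.card_pos (α := V)]
  obtain ⟨u, hu, hmax⟩ := exists_max_image S (fun x => #(B.neighborFinset x ∩ S)) hSne
  have : Nonempty β := ⟨u⟩
  rcases containsCopyIn_copies_top_or_isIndepSet B (B.neighborFinset u ∩ S) k with
    hmatch | ⟨W, hWS, hW, hWcard⟩
  · right
    exact containsCopyIn_fan (S := S) hu (by simpa using hmatch)
  · left
    refine containsCopy_compl_of_room (hWS.trans inter_subset_right) hW hmax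
      fun j t hj hjn htj ht => ?_
    have := greedy_room_bound (b := #(B.neighborFinset u ∩ S)) hk hjn htj ht (by omega) hc hc'
    omega

theorem ramseyProp_copies_fan {V : Type*} [Fintype V] [Nonempty V] (G : SimpleGraph V)
    [DecidableRel G.Adj] {k t c N : ℕ} (hk : 1 ≤ k)
    (hc : 2 * #G.edgeFinset ≤ Fintype.card V * c)
    (hc' : Fintype.card V * c < 2 * #G.edgeFinset + Fintype.card V)
    (hN : Fintype.card V + 2 * #G.edgeFinset * k + (t - 1) * (2 * k + 1) ≤ N + c) :
    ramseyProp G (copies t (fan k)) N := by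
  classical
  intro red
  by_cases hred : red.ContainsCopy G
  · exact .inl hred
  refine .inr (containsCopyIn_copies (S := univ)
    (N := Fintype.card V + 2 * #G.edgeFinset * k - c) t (fun S _ hS => ?_) ?_).containsCopy
  · refine (containsCopy_compl_or_containsCopyIn_fan G redᶜ hk hc hc' (by omega)).resolve_left
      (by rwa [compl_compl])
  · have : c ≤ 2 * #G.edgeFinset := by nlinarith [Fintype.card_pos (α := V)]
    have := Nat.le_mul_of_pos_right (2 * #G.edgeFinset) hk
    have : Fintype.card (Option (Fin k × Fin 2)) = 2 * k + 1 := by simp [mul_comm]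
    rw [this, card_univ, Fintype.card_fin]
    rcases t with _ | t
    · omega
    · rw [Nat.add_sub_cancel, add_one_mul] at *
      omega

theorem ramsey_tFan_upper_general_general {V : Type*} [Fintype V] (n m k t : ℕ) (hk : 1 ≤ k)
    (ht : 1 ≤ t) (hn : 2 ≤ n)
    (G : SimpleGraph V) (hcard : Fintype.card V = n) (hm : G.edgeSet.ncard = m) :
    (ramseyNumber G (copies t (fan k)) : ℝ) ≤
      (n : ℝ) + 2 * (m : ℝ) * (k : ℝ) - 2 * (m : ℝ) / (n : ℝ)
        + ((t : ℝ) - 1) * (2 * (k : ℝ) + 1) := by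
  classical
  have : Nonempty V := Fintype.card_pos_iff.1 (by omega)
  have hm' : #G.edgeFinset = m := by rw [← hm, ← coe_edgeFinset, Set.ncard_coe_finset]
  obtain ⟨c, hc, hc'⟩ : ∃ c, 2 * m ≤ n * c ∧ n * c < 2 * m + n := by
    refine ⟨(2 * m + n - 1) / n, ?_⟩
    have := Nat.div_add_mod (2 * m + n - 1) n
    have := Nat.mod_lt (2 * m + n - 1) (by omega : 0 < n)
    omega
  obtain ⟨N, hN⟩ : ∃ N, N + c = n + 2 * m * k + (t - 1) * (2 * k + 1) :=
    ⟨_, Nat.sub_add_cancel (by nlinarith)⟩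
  have hR : ramseyNumber G (copies t (fan k)) ≤ N :=
    Nat.sInf_le (ramseyProp_copies_fan G hk (by rwa [hcard, hm']) (by rwa [hcard, hm'])
      (by rw [hcard, hm']; omega))
  have hcR : 2 * (m : ℝ) / n ≤ c := by
    rw [div_le_iff₀ (by positivity)]
    exact_mod_cast hc.trans_eq (mul_comm n c)
  have hNR : (N : ℝ) + c = n + 2 * m * k + (t - 1) * (2 * k + 1) := by
    simpa [Nat.cast_sub ht] using congrArg (Nat.cast : ℕ → ℝ) hN
  calc (ramseyNumber G (copies t (fan k)) : ℝ) ≤ N := by exact_mod_cast hR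
    _ ≤ _ := by linarith

/-- Corollary 15: if `G` is a simple graph on `n ≥ 2` vertices none of which is isolated and
with `m` edges, then `r(G, tF_k) ≤ n + 2mk − 2m/n + (t − 1)(2k + 1)`. -/
theorem ramsey_tFan_upper_general {V : Type*} [Fintype V] (n m k t : ℕ) (hk : 1 ≤ k)
    (ht : 1 ≤ t) (hn : 2 ≤ n)
    (G : SimpleGraph V) (hcard : Fintype.card V = n) (hm : G.edgeSet.ncard = m)
    (hiso : ∀ v : V, ∃ w : V, G.Adj v w) :
    (ramseyNumber G (copies t (fan k)) : ℝ) ≤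
      (n : ℝ) + 2 * (m : ℝ) * (k : ℝ) - 2 * (m : ℝ) / (n : ℝ)
        + ((t : ℝ) - 1) * (2 * (k : ℝ) + 1) :=
  ramsey_tFan_upper_general_general n m k t hk ht hn G hcard hm
end

section
/- Let k ≥ 1 and t ≥ 1 be integers and suppose n ≥ max{12kt + 2k − 19, 10kt + 2k − 13, 4k^2t − 2k^2 − kt − t + 1}. Then the Ramsey number r(K_{1,n−1}, tF_k) equals 2n + t − 2. -/
/-!
Lower bound: colour the edges of `K_{2n+t-3}` red inside two disjoint sets of `n - 1` vertices and
blue otherwise. No vertex has `n - 1` red neighbours, and since the blue edges between the two sets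
form a bipartite graph, every blue triangle, hence every blue fan, uses one of the remaining `t - 1`
vertices.

Upper bound: without a red `K_{1,n-1}` the blue graph on `2n + t - 2` vertices has minimum degree at
least `n + t - 1`, and we grow a family of disjoint fans one fan at a time. Let `U` be the vertex set
of `p < t` disjoint fans. For `v ∉ U`, if `N(v) \ U` contained `k` disjoint edges we could add a fan
centred at `v`, so all but `2k - 2` vertices of `N(v) \ U` form an independent set `I`; the degree
condition makes every vertex of `I` adjacent to all but at most `ε = n - 1 - |I|` vertices outside
`I`. The same applied to a vertex of `I` gives a second such set `J`, disjoint from `I`.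
* If some `v ∉ U` has at most `(k + 1) p` neighbours in `U`, then `ε` is small, and counting
  non-edges shows that at least `t` vertices outside `I ∪ J` have `k` neighbours in both `I` and `J`,
  so they are centres of fans whose other vertices lie in `I ∪ J`. If one of them lies outside `U` we
  add its fan; otherwise two of them, one with `2k` neighbours in both `I` and `J`, lie in one fan of
  the family, which we replace by the two fans they centre.
* Otherwise take a matching of `k (2k - 1) p + 1` edges between `I` and `J`. Both ends of each edge
  have more than `(k + 1) p` of the `(2k + 1) p` vertices of `U` as neighbours, hence at least
  `p + 2` common ones, and double counting yields two vertices of one fan of the family each adjacent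
  to both ends of `2k` of the edges; again that fan is replaced by two.
-/

open SimpleGraph

open Finset

theorem Finset.exists_injective_forall_mem_of_card_le {ι α : Type*} [Fintype ι] [DecidableEq α]
    (t : ι → Finset α) (ht : ∀ i, Fintype.card ι ≤ #(t i)) :
    ∃ f : ι → α, Function.Injective f ∧ ∀ i, f i ∈ t i := by
  refine (all_card_le_biUnion_card_iff_exists_injective t).1 fun s => ?_
  obtain rfl | ⟨i, hi⟩ := s.eq_empty_or_nonempty
  · simp
  · exact (card_le_univ s).trans ((ht i).trans (card_le_card (subset_biUnion_of_mem t hi)))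

theorem Finset.sum_le_of_forall_ne_le {ι : Type*} {s : Finset ι} {f : ι → ℕ} {M θ : ℕ}
    (hθ : θ ≤ M) (hM : ∀ i ∈ s, f i ≤ M)
    (h : ∀ i ∈ s, ∀ j ∈ s, i ≠ j → f i ≤ θ ∨ f j ≤ θ) :
    ∑ i ∈ s, f i ≤ M + (#s - 1) * θ := by
  classical
  by_cases hbig : ∃ i ∈ s, θ < f i
  · obtain ⟨i, hi, hθi⟩ := hbig
    have hrest : ∀ j ∈ s.erase i, f j ≤ θ := fun j hj =>
      (h i hi j (mem_of_mem_erase hj) (ne_of_mem_erase hj).symm).resolve_left (by omega)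
    rw [← add_sum_erase s f hi, ← card_erase_of_mem hi]
    exact add_le_add (hM i hi) (by simpa using sum_le_card_nsmul _ _ _ hrest)
  · push Not at hbig
    calc ∑ i ∈ s, f i ≤ #s * θ := by simpa using sum_le_card_nsmul _ _ _ hbig
      _ ≤ M + (#s - 1) * θ := by
        rcases Nat.eq_zero_or_pos #s with h0 | hpos
        · simp [h0]
        · rw [← Nat.sub_one_add_one hpos.ne', add_mul, one_mul, Nat.add_sub_cancel]; omega

theorem Finset.card_eq_sum_card_inter {ι α : Type*} [DecidableEq α] {P : Finset ι}
    {A : ι → Finset α} (hA : (P : Set ι).PairwiseDisjoint A) {X : Finset α}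
    (hX : X ⊆ P.biUnion A) : #X = ∑ i ∈ P, #(X ∩ A i) := by
  rw [← card_biUnion (hA.mono fun i => inter_subset_right), ← inter_biUnion, inter_eq_left.2 hX]

theorem Finset.exists_mem_ne_of_card_lt {ι α : Type*} [DecidableEq α] {P : Finset ι}
    {A : ι → Finset α} (hA : (P : Set ι).PairwiseDisjoint A) {S T : Finset α} (hST : S ⊆ T)
    (hT : T ⊆ P.biUnion A) (hTcard : #P < #T) (hScard : #P ≤ #S) :
    ∃ i ∈ P, ∃ u ∈ S ∩ A i, ∃ u' ∈ T ∩ A i, u ≠ u' := by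
  classical
  obtain ⟨i₁, hi₁, hlt⟩ : ∃ i ∈ P, 1 < #(T ∩ A i) := by
    refine exists_lt_of_sum_lt ?_
    rwa [sum_const, smul_eq_mul, mul_one, ← card_eq_sum_card_inter hA hT]
  by_cases hS₁ : (S ∩ A i₁).Nonempty
  · obtain ⟨u, hu⟩ := hS₁
    obtain ⟨u', hu', hne⟩ := exists_mem_ne hlt u
    exact ⟨i₁, hi₁, u, hu, u', hu', hne.symm⟩
  · obtain ⟨i₂, hi₂, hlt₂⟩ : ∃ i ∈ P.erase i₁, 1 < #(S ∩ A i) := by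
      refine exists_lt_of_sum_lt ?_
      have hS := card_eq_sum_card_inter hA (hST.trans hT)
      rw [← add_sum_erase P _ hi₁, not_nonempty_iff_eq_empty.1 hS₁, card_empty,
        zero_add] at hS
      rw [sum_const, smul_eq_mul, mul_one, card_erase_of_mem hi₁, ← hS]
      have : 0 < #P := card_pos.2 ⟨i₁, hi₁⟩
      omega
    obtain ⟨u, hu, u', hu', hne⟩ := one_lt_card.1 hlt₂
    exact ⟨i₂, mem_of_mem_erase hi₂, u, hu, u', inter_subset_inter_right hST hu', hne⟩

theorem Finset.exists_injective_sumElim_of_card_le {α : Type*} [DecidableEq α] {k : ℕ}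
    {S₁ S₂ : Finset α} (h₁ : 2 * k ≤ #S₁) (h₂ : 2 * k ≤ #S₂) :
    ∃ σ₁ σ₂ : Fin k → α, (∀ j, σ₁ j ∈ S₁ ∧ σ₂ j ∈ S₂) ∧
      Function.Injective (Sum.elim σ₁ σ₂) := by
  obtain ⟨σ, hσ, hσS⟩ := exists_injective_forall_mem_of_card_le
    (Sum.elim (fun _ : Fin k => S₁) fun _ : Fin k => S₂) fun i => by
      cases i <;> simp only [Fintype.card_sum, Fintype.card_fin, Sum.elim_inl, Sum.elim_inr] <;>
        omega
  refine ⟨σ ∘ Sum.inl, σ ∘ Sum.inr, fun j => ⟨hσS (.inl j), hσS (.inr j)⟩, ?_⟩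
  rwa [Sum.elim_comp_inl_inr]

structure Admissible (k t n : ℕ) : Prop where
  one_le_k : 1 ≤ k
  one_le_t : 1 ≤ t
  bound₁ : 12 * (k : ℤ) * t + 2 * k - 19 ≤ n
  bound₂ : 10 * (k : ℤ) * t + 2 * k - 13 ≤ n
  bound₃ : 4 * (k : ℤ) ^ 2 * t - 2 * k ^ 2 - k * t - t + 1 ≤ n

namespace Admissible

variable {k t n p ε ε₂ : ℕ}

theorem one_le_n (h : Admissible k t n) : 1 ≤ n := by
  have hk : (1 : ℤ) ≤ k := by exact_mod_cast h.one_le_k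
  have ht : (1 : ℤ) ≤ t := by exact_mod_cast h.one_le_t
  have := h.bound₃
  have : (1 : ℤ) ≤ n := by
    nlinarith [mul_nonneg (by nlinarith : (0 : ℤ) ≤ 2 * (k : ℤ) ^ 2)
        (by linarith : (0 : ℤ) ≤ t - 1),
      mul_nonneg (by nlinarith : (0 : ℤ) ≤ 2 * (k : ℤ) ^ 2 - k - 1)
        (by linarith : (0 : ℤ) ≤ t)]
  exact_mod_cast this

theorem two_le_n_or_t_eq_one (h : Admissible k t n) : 2 ≤ n ∨ t = 1 := by
  by_contra! hc
  have hn : (n : ℤ) ≤ 1 := by exact_mod_cast (by omega : n ≤ 1)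
  have hk : (1 : ℤ) ≤ k := by exact_mod_cast h.one_le_k
  have ht : (2 : ℤ) ≤ t := by exact_mod_cast (by have := h.one_le_t; omega : 2 ≤ t)
  have := h.bound₃
  nlinarith [mul_nonneg (by linarith : (0 : ℤ) ≤ t - 2)
    (by nlinarith : (0 : ℤ) ≤ 4 * (k : ℤ) ^ 2 - k - 1)]

theorem mul_two_mul_add_one_add_three_le (h : Admissible k t n) (hpt : p + 1 ≤ t) :
    p * (2 * k + 1) + 3 ≤ 2 * n + t := by
  have hk : (1 : ℤ) ≤ k := by exact_mod_cast h.one_le_k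
  have hp : (p : ℤ) + 1 ≤ t := by exact_mod_cast hpt
  have := h.bound₃
  have : (p : ℤ) * (2 * k + 1) + 3 ≤ 2 * n + t := by
    nlinarith [mul_nonneg (by linarith : (0 : ℤ) ≤ 2 * k + 1)
        (by linarith : (0 : ℤ) ≤ t - 1 - p),
      mul_nonneg (by linarith : (0 : ℤ) ≤ t - 1)
        (by nlinarith : (0 : ℤ) ≤ 4 * (k : ℤ) ^ 2 - 2 * k - 1),
      (by nlinarith : (0 : ℤ) ≤ 2 * (k : ℤ) ^ 2 - k - 1)]
  exact_mod_cast this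

theorem succ_mul_pred_add_le (h : Admissible k t n) (hpt : p + 1 ≤ t)
    (hε : ε + t + 2 ≤ 2 * k + (2 * k + 1) * p) : (ε + 1) * (k - 1) + ε + 2 ≤ n := by
  obtain ⟨θ, hθ⟩ : ∃ θ, θ + 1 = k := ⟨k - 1, by have := h.one_le_k; omega⟩
  rw [← hθ, Nat.add_sub_cancel]
  have hk : (1 : ℤ) ≤ k := by exact_mod_cast h.one_le_k
  have ht : (1 : ℤ) ≤ t := by exact_mod_cast h.one_le_t
  have hp : (p : ℤ) + 1 ≤ t := by exact_mod_cast hpt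
  have hε' : (ε : ℤ) + t + 2 ≤ 2 * k + (2 * k + 1) * p := by exact_mod_cast hε
  have hθ' : (θ : ℤ) + 1 = k := by exact_mod_cast hθ
  have := h.bound₁
  have := h.bound₃
  have hεb : (ε : ℤ) ≤ 2 * k * t - 3 := by
    nlinarith [mul_nonneg (by linarith : (0 : ℤ) ≤ 2 * k + 1)
      (by linarith : (0 : ℤ) ≤ t - 1 - p)]
  have : ((ε : ℤ) + 1) * θ + ε + 2 ≤ n := by
    nlinarith [mul_nonneg (by linarith : (0 : ℤ) ≤ t - 1)
        (by nlinarith : (0 : ℤ) ≤ 3 * (k : ℤ) ^ 2 - k - 1),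
      mul_nonneg (by linarith : (0 : ℤ) ≤ k - 1)
        (by linarith : (0 : ℤ) ≤ 2 * k * t - 3 - ε)]
  exact_mod_cast this

theorem succ_mul_two_mul_pred_add_le (h : Admissible k t n) (hp1 : 1 ≤ p) (hpt : p + 1 ≤ t)
    (hε : ε + t + 2 ≤ 2 * k + (k + 1) * p) : (ε + 1) * (2 * k - 1) + ε + 2 ≤ n := by
  obtain ⟨θ, hθ⟩ : ∃ θ, θ + 1 = 2 * k := ⟨2 * k - 1, by have := h.one_le_k; omega⟩
  rw [← hθ, Nat.add_sub_cancel]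
  have hk : (1 : ℤ) ≤ k := by exact_mod_cast h.one_le_k
  have ht : (2 : ℤ) ≤ t := by exact_mod_cast (by omega : 2 ≤ t)
  have hp : (p : ℤ) + 1 ≤ t := by exact_mod_cast hpt
  have hε' : (ε : ℤ) + t + 2 ≤ 2 * k + (k + 1) * p := by exact_mod_cast hε
  have hθ' : (θ : ℤ) + 1 = 2 * k := by exact_mod_cast hθ
  have := h.bound₁
  have := h.bound₃
  have hεb : (ε : ℤ) ≤ k * t + k - 3 := by
    nlinarith [mul_nonneg (by linarith : (0 : ℤ) ≤ k + 1)
      (by linarith : (0 : ℤ) ≤ t - 1 - p)]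
  have : ((ε : ℤ) + 1) * θ + ε + 2 ≤ n := by
    nlinarith [mul_nonneg (by linarith : (0 : ℤ) ≤ t - 2)
        (by nlinarith : (0 : ℤ) ≤ 2 * (k : ℤ) ^ 2 - k - 1),
      mul_nonneg (by linarith : (0 : ℤ) ≤ 2 * k)
        (by linarith : (0 : ℤ) ≤ k * t + k - 3 - ε)]
  exact_mod_cast this

theorem add_two_mul_two_mul_pred_add_le (h : Admissible k t n) (hp1 : 1 ≤ p) (hpt : p + 1 ≤ t)
    (hε : ε + t + 2 ≤ 2 * k + (2 * k + 1) * p) :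
    (ε + 2) * (2 * k - 1) + 2 * ε + 3 ≤ 2 * n := by
  obtain ⟨θ, hθ⟩ : ∃ θ, θ + 1 = 2 * k := ⟨2 * k - 1, by have := h.one_le_k; omega⟩
  rw [← hθ, Nat.add_sub_cancel]
  have hk : (1 : ℤ) ≤ k := by exact_mod_cast h.one_le_k
  have ht : (2 : ℤ) ≤ t := by exact_mod_cast (by omega : 2 ≤ t)
  have hp : (p : ℤ) + 1 ≤ t := by exact_mod_cast hpt
  have hε' : (ε : ℤ) + t + 2 ≤ 2 * k + (2 * k + 1) * p := by exact_mod_cast hε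
  have hθ' : (θ : ℤ) + 1 = 2 * k := by exact_mod_cast hθ
  have := h.bound₁
  have := h.bound₃
  have hεb : (ε : ℤ) ≤ 2 * k * t - 3 := by
    nlinarith [mul_nonneg (by linarith : (0 : ℤ) ≤ 2 * k + 1)
      (by linarith : (0 : ℤ) ≤ t - 1 - p)]
  have : ((ε : ℤ) + 2) * θ + 2 * ε + 3 ≤ 2 * n := by
    rcases Nat.lt_or_ge k 2 with hk2 | hk2
    · have hk1 : (k : ℤ) = 1 := by exact_mod_cast (by omega : k = 1)
      nlinarith [mul_nonneg (by linarith : (0 : ℤ) ≤ 3)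
        (by linarith : (0 : ℤ) ≤ 2 * k * t - 3 - ε)]
    · have hk2' : (2 : ℤ) ≤ k := by exact_mod_cast hk2
      nlinarith [mul_nonneg (by linarith : (0 : ℤ) ≤ t - 2)
          (by nlinarith : (0 : ℤ) ≤ 4 * (k : ℤ) ^ 2 - 4 * k - 2),
        mul_nonneg (by linarith : (0 : ℤ) ≤ 2 * k + 1)
          (by linarith : (0 : ℤ) ≤ 2 * k * t - 3 - ε),
        (by nlinarith : (0 : ℤ) ≤ 4 * (k : ℤ) ^ 2 - 6 * k)]
  exact_mod_cast this

theorem four_mul_add_le (h : Admissible k t n) (hpt : p + 1 ≤ t)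
    (hε : ε + t + 2 ≤ 2 * k + (k + 1) * p)
    (hε₂ : ε₂ + t + 2 ≤ 2 * k + (2 * k + 1) * p) :
    4 * k + 2 * ε + 2 * ε₂ ≤ n + 1 := by
  have hk : (1 : ℤ) ≤ k := by exact_mod_cast h.one_le_k
  have ht : (1 : ℤ) ≤ t := by exact_mod_cast h.one_le_t
  have hp : (p : ℤ) + 1 ≤ t := by exact_mod_cast hpt
  have hε' : (ε : ℤ) + t + 2 ≤ 2 * k + (k + 1) * p := by exact_mod_cast hε
  have hε₂' : (ε₂ : ℤ) + t + 2 ≤ 2 * k + (2 * k + 1) * p := by exact_mod_cast hε₂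
  have := h.bound₂
  have : 4 * (k : ℤ) + 2 * ε + 2 * ε₂ ≤ n + 1 := by
    nlinarith [mul_nonneg (by linarith : (0 : ℤ) ≤ k + 1)
        (by linarith : (0 : ℤ) ≤ t - 1 - p),
      mul_nonneg (by linarith : (0 : ℤ) ≤ 2 * k + 1)
        (by linarith : (0 : ℤ) ≤ t - 1 - p),
      mul_nonneg (by linarith : (0 : ℤ) ≤ k) (by linarith : (0 : ℤ) ≤ t - 1)]
  exact_mod_cast this

theorem mul_two_mul_pred_mul_add_le (h : Admissible k t n) (hp1 : 1 ≤ p) (hpt : p + 1 ≤ t)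
    (hε : ε + t + 2 ≤ 2 * k + (2 * k + 1) * p)
    (hε₂ : ε₂ + t + 2 ≤ 2 * k + (2 * k + 1) * p) :
    k * (2 * k - 1) * p + ε + ε₂ + 3 ≤ n := by
  obtain ⟨θ, hθ⟩ : ∃ θ, θ + 1 = 2 * k := ⟨2 * k - 1, by have := h.one_le_k; omega⟩
  rw [← hθ, Nat.add_sub_cancel]
  have hk : (1 : ℤ) ≤ k := by exact_mod_cast h.one_le_k
  have ht : (2 : ℤ) ≤ t := by exact_mod_cast (by omega : 2 ≤ t)
  have hp1' : (1 : ℤ) ≤ p := by exact_mod_cast hp1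
  have hp : (p : ℤ) + 1 ≤ t := by exact_mod_cast hpt
  have hε' : (ε : ℤ) + t + 2 ≤ 2 * k + (2 * k + 1) * p := by exact_mod_cast hε
  have hε₂' : (ε₂ : ℤ) + t + 2 ≤ 2 * k + (2 * k + 1) * p := by exact_mod_cast hε₂
  have hθ' : (θ : ℤ) + 1 = 2 * k := by exact_mod_cast hθ
  have h1 := h.bound₁
  have := h.bound₃
  have : (k : ℤ) * θ * p + ε + ε₂ + 3 ≤ n := by
    rcases Nat.lt_or_ge k 3 with hk3 | hk3
    · obtain rfl | rfl : k = 1 ∨ k = 2 := by have := h.one_le_k; omega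
      · obtain rfl : θ = 1 := by omega
        push_cast at hε' hε₂' h1 ⊢
        linarith
      · obtain rfl : θ = 3 := by omega
        push_cast at hε' hε₂' h1 ⊢
        linarith
    · have hk3' : (3 : ℤ) ≤ k := by exact_mod_cast hk3
      nlinarith [mul_nonneg (by linarith : (0 : ℤ) ≤ 2 * k + 1)
          (by linarith : (0 : ℤ) ≤ t - 1 - p),
        mul_nonneg (by nlinarith : (0 : ℤ) ≤ (2 * k - 1) * k)
          (by linarith : (0 : ℤ) ≤ t - 1 - p),
        mul_nonneg (by linarith : (0 : ℤ) ≤ t - 2)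
          (by nlinarith : (0 : ℤ) ≤ 2 * (k : ℤ) ^ 2 - 4 * k - 1),
        (by nlinarith : (0 : ℤ) ≤ 4 * (k : ℤ) ^ 2 - 9 * k + 3)]
  exact_mod_cast this

end Admissible

/-! ### Matchings and fan packings -/

namespace SimpleGraph

section Matching

variable {V : Type*} {G : SimpleGraph V} {k : ℕ}

variable (G) in
def IsIndexedMatching (M : Fin k × Fin 2 → V) : Prop :=
  Function.Injective M ∧ ∀ j, G.Adj (M (j, 0)) (M (j, 1))

def consEdge (x y : V) (M : Fin k × Fin 2 → V) : Fin (k + 1) × Fin 2 → V :=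
  fun p => Fin.cases (![x, y] p.2) (fun j => M (j, p.2)) p.1

theorem IsIndexedMatching.consEdge {M : Fin k × Fin 2 → V} (hM : G.IsIndexedMatching M)
    {x y : V} (hxy : G.Adj x y) (hx : x ∉ Set.range M) (hy : y ∉ Set.range M) :
    G.IsIndexedMatching (consEdge x y M) := by
  simp only [Set.mem_range, not_exists] at hx hy
  refine ⟨?_, fun j => ?_⟩
  · rintro ⟨i, c⟩ ⟨i', c'⟩ h
    induction i using Fin.cases <;> induction i' using Fin.cases <;>
      fin_cases c <;> fin_cases c' <;>
      simp_all [SimpleGraph.consEdge, hxy.ne, hxy.ne.symm, hM.1.eq_iff, eq_comm]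
  · induction j using Fin.cases
    · simpa [SimpleGraph.consEdge] using hxy
    · simpa [SimpleGraph.consEdge] using hM.2 _

theorem IsIndexedMatching.comp {m : ℕ} {M : Fin m × Fin 2 → V} (hM : G.IsIndexedMatching M)
    {σ : Fin k → Fin m} (hσ : Function.Injective σ) :
    G.IsIndexedMatching fun p => M (σ p.1, p.2) :=
  ⟨hM.1.comp (hσ.prodMap Function.injective_id), fun j => hM.2 (σ j)⟩

variable [DecidableEq V]

theorem card_image_inter_le (M : Fin k × Fin 2 → V) (c : Fin 2) {X : Finset V}
    (h : ∀ x, M x ∈ X → x.2 = c) : #(univ.image M ∩ X) ≤ k := by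
  calc #(univ.image M ∩ X) ≤ #(univ.image fun j => M (j, c)) := card_le_card fun v hv => by
        obtain ⟨hv, hvX⟩ := mem_inter.1 hv
        obtain ⟨x, -, rfl⟩ := mem_image.1 hv
        exact mem_image.2 ⟨x.1, mem_univ _, by rw [← h x hvX]⟩
    _ ≤ k := card_image_le.trans (by simp)

theorem exists_indexedMatching_or_isIndepSet (k : ℕ) (s : Finset V) :
    (∃ M : Fin k × Fin 2 → V, G.IsIndexedMatching M ∧ ∀ x, M x ∈ s) ∨
      ∃ I ⊆ s, G.IsIndepSet (I : Set V) ∧ #s + 2 ≤ #I + 2 * k := by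
  induction k generalizing s with
  | zero => exact Or.inl ⟨fun x => x.1.elim0, ⟨fun x => x.1.elim0, fun j => j.elim0⟩,
      fun x => x.1.elim0⟩
  | succ k ih =>
    by_cases hs : G.IsIndepSet (s : Set V)
    · exact Or.inr ⟨s, subset_rfl, hs, by omega⟩
    obtain ⟨x, hx, y, hy, -, hxy⟩ : ∃ x ∈ s, ∃ y ∈ s, x ≠ y ∧ G.Adj x y := by
      simpa [Set.Pairwise] using hs
    have hcard : #(s \ {x, y}) + 2 = #s := by
      rw [card_sdiff_of_subset (by simp [insert_subset_iff, hx, hy]), card_pair hxy.ne]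
      have : 2 ≤ #s := by
        simpa [card_pair hxy.ne] using
          card_le_card (s := {x, y}) (by simp [insert_subset_iff, hx, hy])
      omega
    rcases ih (s \ {x, y}) with ⟨M, hM, hMs⟩ | ⟨I, hIs, hI, hIcard⟩
    · have hMxy : ∀ z, M z ≠ x ∧ M z ≠ y := fun z => by simpa using (mem_sdiff.1 (hMs z)).2
      refine Or.inl ⟨consEdge x y M, hM.consEdge hxy (by simpa using fun z => (hMxy z).1)
        (by simpa using fun z => (hMxy z).2), fun ⟨i, c⟩ => ?_⟩
      induction i using Fin.cases
      · fin_cases c <;> simpa [consEdge]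
      · exact (mem_sdiff.1 (hMs _)).1
    · exact Or.inr ⟨I, hIs.trans sdiff_subset, hI, by omega⟩

theorem exists_indexedMatching_of_card_sdiff_le [DecidableRel G.Adj] [Fintype V] {A B : Finset V}
    {e : ℕ} (hAB : Disjoint A B) (hA : k ≤ #A) (hB : k + e ≤ #B)
    (hmiss : ∀ x ∈ A, #(B \ G.neighborFinset x) ≤ e) :
    ∃ M : Fin k × Fin 2 → V,
      G.IsIndexedMatching M ∧ ∀ j, M (j, 0) ∈ A ∧ M (j, 1) ∈ B := by
  obtain ⟨a, ha, haA⟩ :=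
    exists_injective_forall_mem_of_card_le (fun _ : Fin k => A) fun _ => by simpa using hA
  obtain ⟨b, hb, hbB⟩ := exists_injective_forall_mem_of_card_le
    (fun j => B ∩ G.neighborFinset (a j)) fun j => by
      have := card_inter_add_card_sdiff B (G.neighborFinset (a j))
      have := hmiss (a j) (haA j)
      simp only [Fintype.card_fin]
      omega
  refine ⟨fun p => ![a p.1, b p.1] p.2, ⟨?_, fun j => ?_⟩,
    fun j => ⟨haA j, (mem_inter.1 (hbB j)).1⟩⟩
  · have hne : ∀ i j, a i ≠ b j := fun i j h =>
      Finset.disjoint_left.1 hAB (haA i) (h ▸ (mem_inter.1 (hbB j)).1)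
    rintro ⟨i, c⟩ ⟨i', c'⟩ h
    fin_cases c <;> fin_cases c' <;> simp_all [ha.eq_iff, hb.eq_iff, (hne _ _).symm]
  · simpa [adj_comm] using (mem_inter.1 (hbB j)).2

variable (G) in
def nbhdEdges [DecidableRel G.Adj] {m : ℕ} (M : Fin m × Fin 2 → V) (u : V) : Finset (Fin m) :=
  univ.filter fun j => G.Adj u (M (j, 0)) ∧ G.Adj u (M (j, 1))

end Matching

section Fan

variable {V : Type*} {G : SimpleGraph V} {k : ℕ}

variable (G) in
def IsFan (g : Option (Fin k × Fin 2) → V) : Prop :=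
  Function.Injective g ∧ ∀ ⦃a b⦄, (fan k).Adj a b → G.Adj (g a) (g b)

theorem IsIndexedMatching.isFan_elim' {M : Fin k × Fin 2 → V} (hM : G.IsIndexedMatching M)
    {r : V} (hr : ∀ x, G.Adj r (M x)) : G.IsFan (Option.elim' r M) := by
  refine ⟨?_, ?_⟩
  · rintro (_ | x) (_ | y) h <;> simp only [Option.elim'] at h
    · rfl
    · exact absurd (h ▸ hr y) (G.loopless.irrefl r)
    · exact absurd (h ▸ hr x) (G.loopless.irrefl r)
    · rw [hM.1 h]
  have hpair : ∀ j (c d : Fin 2), c ≠ d → G.Adj (M (j, c)) (M (j, d)) := by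
    intro j c d hcd
    fin_cases c <;> fin_cases d <;> simp_all [hM.2 j, (hM.2 j).symm]
  rintro a b ⟨hab, (rfl | ⟨j, c, d, rfl, rfl⟩) | (rfl | ⟨j, c, d, rfl, rfl⟩)⟩
  · obtain _ | y := b
    · exact absurd rfl hab
    · exact hr y
  · exact hpair j c d fun h => hab (h ▸ rfl)
  · obtain _ | x := a
    · exact absurd rfl hab
    · exact (hr x).symm
  · exact hpair j d c fun h => hab (h ▸ rfl)

variable [DecidableEq V]

theorem image_elim' (r : V) (M : Fin k × Fin 2 → V) :
    univ.image (Option.elim' r M) = insert r (univ.image M) := by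
  ext v
  simp [Option.exists, eq_comm]

variable (G) in
structure IsFanPacking (P : Finset (Option (Fin k × Fin 2) → V)) : Prop where
  isFan : ∀ g ∈ P, G.IsFan g
  pairwiseDisjoint :
    (P : Set (Option (Fin k × Fin 2) → V)).PairwiseDisjoint fun g => univ.image g

def packingVerts (P : Finset (Option (Fin k × Fin 2) → V)) : Finset V :=
  P.biUnion fun g => univ.image g

variable (G k) in
def HasFanPacking (m : ℕ) : Prop :=
  ∃ P : Finset (Option (Fin k × Fin 2) → V), G.IsFanPacking P ∧ #P = m

theorem hasFanPacking_zero : G.HasFanPacking k 0 :=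
  ⟨∅, ⟨by simp, by simp⟩, rfl⟩

namespace IsFanPacking

variable {P : Finset (Option (Fin k × Fin 2) → V)}

theorem card_packingVerts (hP : G.IsFanPacking P) : #(packingVerts P) = #P * (2 * k + 1) := by
  rw [packingVerts, card_biUnion hP.pairwiseDisjoint, sum_congr rfl fun g hg =>
    card_image_of_injective _ (hP.isFan g hg).1]
  simp [mul_comm]

theorem subset (hP : G.IsFanPacking P) {Q : Finset (Option (Fin k × Fin 2) → V)} (hQ : Q ⊆ P) :
    G.IsFanPacking Q :=
  ⟨fun g hg => hP.isFan g (hQ hg), hP.pairwiseDisjoint.subset hQ⟩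

theorem insert_of_disjoint (hP : G.IsFanPacking P) {g : Option (Fin k × Fin 2) → V}
    (hg : G.IsFan g) (hdisj : Disjoint (univ.image g) (packingVerts P)) :
    G.IsFanPacking (insert g P) ∧ #(insert g P) = #P + 1 := by
  have hgP : g ∉ P := fun hg' => by
    simpa using Finset.disjoint_left.1 hdisj (mem_image_of_mem g (mem_univ none))
      (mem_biUnion.2 ⟨g, hg', mem_image_of_mem g (mem_univ none)⟩)
  refine ⟨⟨forall_mem_insert _ _ _ |>.2 ⟨hg, hP.isFan⟩, ?_⟩, card_insert_of_notMem hgP⟩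
  rw [coe_insert]
  exact hP.pairwiseDisjoint.insert fun g' hg' _ =>
    hdisj.mono_right (subset_biUnion_of_mem (fun g => univ.image g) hg')

theorem hasFanPacking_succ_of_fan (hP : G.IsFanPacking P) {M : Fin k × Fin 2 → V} {r : V}
    (hM : G.IsIndexedMatching M) (hrM : ∀ x, G.Adj r (M x)) (hr : r ∉ packingVerts P)
    (hMP : ∀ x, M x ∉ packingVerts P) : G.HasFanPacking k (#P + 1) := by
  refine ⟨_, hP.insert_of_disjoint (hM.isFan_elim' hrM) ?_⟩
  rw [image_elim', disjoint_insert_left]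
  refine ⟨hr, Finset.disjoint_left.2 fun v hv => ?_⟩
  obtain ⟨x, -, rfl⟩ := mem_image.1 hv
  exact hMP x

theorem hasFanPacking_succ_of_split (hP : G.IsFanPacking P) {g₀ : Option (Fin k × Fin 2) → V}
    (hg₀ : g₀ ∈ P) {r₁ r₂ : V} (hr₁ : r₁ ∈ univ.image g₀)
    (hr₂ : r₂ ∈ univ.image g₀) (hr : r₁ ≠ r₂) {M₁ M₂ : Fin k × Fin 2 → V}
    (hM₁ : G.IsIndexedMatching M₁) (hM₂ : G.IsIndexedMatching M₂)
    (hrM₁ : ∀ x, G.Adj r₁ (M₁ x)) (hrM₂ : ∀ x, G.Adj r₂ (M₂ x))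
    (hM₁P : ∀ x, M₁ x ∉ packingVerts P) (hM₂P : ∀ x, M₂ x ∉ packingVerts P)
    (hM₁₂ : ∀ x y, M₁ x ≠ M₂ y) : G.HasFanPacking k (#P + 1) := by
  have hr₀ : ∀ r ∈ univ.image g₀, r ∉ packingVerts (P.erase g₀) := fun r hr hr' => by
    obtain ⟨g, hg, hrg⟩ := mem_biUnion.1 hr'
    exact Finset.disjoint_left.1
      (hP.pairwiseDisjoint hg₀ (mem_of_mem_erase hg) (ne_of_mem_erase hg).symm) hr hrg
  have hU : packingVerts (P.erase g₀) ⊆ packingVerts P :=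
    biUnion_subset_biUnion_of_subset_left _ (erase_subset _ _)
  have hdisj : ∀ {r} {M : Fin k × Fin 2 → V}, r ∈ univ.image g₀ →
      (∀ x, M x ∉ packingVerts P) →
      Disjoint (univ.image (Option.elim' r M)) (packingVerts (P.erase g₀)) := fun hr hMP => by
    rw [image_elim', disjoint_insert_left]
    refine ⟨hr₀ _ hr, Finset.disjoint_left.2 fun v hv hv' => ?_⟩
    obtain ⟨x, -, rfl⟩ := mem_image.1 hv
    exact hMP x (hU hv')
  obtain ⟨hQ₁, hcard₁⟩ := (hP.subset (erase_subset g₀ P)).insert_of_disjoint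
    (hM₁.isFan_elim' hrM₁) (hdisj hr₁ hM₁P)
  have h₁₂ : Disjoint (univ.image (Option.elim' r₂ M₂))
      (packingVerts (insert (Option.elim' r₁ M₁) (P.erase g₀))) := by
    rw [packingVerts, biUnion_insert, ← packingVerts, disjoint_union_right]
    refine ⟨?_, hdisj hr₂ hM₂P⟩
    have hmem : ∀ {r}, r ∈ univ.image g₀ → r ∈ packingVerts P := fun hr =>
      mem_biUnion.2 ⟨g₀, hg₀, hr⟩
    rw [image_elim', image_elim', disjoint_insert_left, disjoint_insert_right, mem_insert, not_or]
    simp only [mem_image, mem_univ, true_and, not_exists]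
    refine ⟨⟨fun h => hr h.symm, fun x h => hM₁P x (h ▸ hmem hr₂)⟩,
      fun x h => hM₂P x (h ▸ hmem hr₁), Finset.disjoint_left.2 fun v hv hv' => ?_⟩
    obtain ⟨x, -, rfl⟩ := mem_image.1 hv
    obtain ⟨y, -, hy⟩ := mem_image.1 hv'
    exact hM₁₂ y x hy
  obtain ⟨hQ₂, hcard₂⟩ := hQ₁.insert_of_disjoint (hM₂.isFan_elim' hrM₂) h₁₂
  refine ⟨_, hQ₂, ?_⟩
  rw [hcard₂, hcard₁, card_erase_of_mem hg₀,
    Nat.sub_add_cancel (card_pos.2 ⟨g₀, hg₀⟩)]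

theorem hasFanPacking_succ_of_nbhdEdges [DecidableRel G.Adj] (hP : G.IsFanPacking P) {m : ℕ}
    {M : Fin m × Fin 2 → V} (hM : G.IsIndexedMatching M) (hMU : ∀ x, M x ∉ packingVerts P)
    {g₀ : Option (Fin k × Fin 2) → V} (hg₀ : g₀ ∈ P) {u u' : V}
    (hu : u ∈ univ.image g₀) (hu' : u' ∈ univ.image g₀) (hne : u ≠ u')
    (h : 2 * k ≤ #(G.nbhdEdges M u))
    (h' : 2 * k ≤ #(G.nbhdEdges M u')) : G.HasFanPacking k (#P + 1) := by
  obtain ⟨σ, σ', hσE, hσ⟩ := exists_injective_sumElim_of_card_le h h'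
  have hadj : ∀ {w} {σ : Fin k → Fin m}, (∀ j, σ j ∈ G.nbhdEdges M w) →
      ∀ x : Fin k × Fin 2, G.Adj w (M (σ x.1, x.2)) := by
    rintro w σ hσw ⟨j, c⟩
    have := (mem_filter.1 (hσw j)).2
    fin_cases c
    exacts [this.1, this.2]
  exact hP.hasFanPacking_succ_of_split hg₀ hu hu' hne
    (hM.comp (hσ.comp Sum.inl_injective)) (hM.comp (hσ.comp Sum.inr_injective))
    (hadj fun j => (hσE j).1) (hadj fun j => (hσE j).2) (fun _ => hMU _) (fun _ => hMU _)
    fun x y h => Sum.inl_ne_inr (hσ (congrArg Prod.fst (hM.1 h)))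

end IsFanPacking

theorem HasFanPacking.containsCopy {t : ℕ} (h : G.HasFanPacking k t) :
    G.ContainsCopy (copies t (fan k)) := by
  obtain ⟨P, hP, rfl⟩ := h
  let e := P.equivFin.symm
  refine ⟨fun p => (e p.1 : Option (Fin k × Fin 2) → V) p.2, ?_, ?_⟩
  · rintro ⟨i, x⟩ ⟨j, y⟩ h
    simp only at h
    by_cases hij : i = j
    · subst hij
      rw [(hP.isFan _ (e i).2).1 h]
    · refine absurd (hP.pairwiseDisjoint (e i).2 (e j).2 ?_) ?_
      · exact fun h' => hij (e.injective (Subtype.ext h'))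
      · exact not_disjoint_iff.2 ⟨_, mem_image_of_mem _ (mem_univ x),
          h ▸ mem_image_of_mem _ (mem_univ y)⟩
  · rintro ⟨i, x⟩ ⟨j, y⟩ ⟨rfl, hxy⟩
    exact (hP.isFan _ (e i).2).2 hxy

end Fan

/-! ### Growing a fan packing -/

section Host

variable {V : Type*} [Fintype V] [DecidableEq V] {G : SimpleGraph V} [DecidableRel G.Adj]
  {k t n : ℕ} {U I J : Finset V} {ε ε₂ : ℕ}

theorem card_le_of_card_sdiff_neighborFinset_le {R : Finset V} {e s θ : ℕ}
    (hI : ∀ x ∈ I, #(R \ G.neighborFinset x) ≤ e)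
    (hR : ∀ r ∈ R, #(G.neighborFinset r ∩ I) ≤ θ)
    (h : (e + s + 1) * θ + 1 ≤ (s + 1) * #I) : #R ≤ e + s := by
  have hcount : #R * (#I - θ) ≤ #I * e := by
    refine card_mul_le_card_mul (fun r x => ¬G.Adj r x) (fun r hr => ?_) (fun x hx => ?_)
    · have hsplit := card_filter_add_card_filter_not (s := I) (G.Adj r)
      have hfil : I.filter (G.Adj r) = G.neighborFinset r ∩ I := by ext; simp [and_comm]
      have := hR r hr
      rw [hfil] at hsplit
      rw [bipartiteAbove]
      omega
    · convert hI x hx using 2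
      ext r
      simp [bipartiteBelow, adj_comm]
  by_contra! hlt
  have hθ : θ < #I := by nlinarith
  obtain ⟨d, hd⟩ : ∃ d, #I = θ + d := ⟨#I - θ, by omega⟩
  rw [hd, Nat.add_sub_cancel_left] at hcount
  rw [hd] at h
  nlinarith [Nat.mul_le_mul_right d hlt]

variable (G) in
structure IsCore (U I : Finset V) (n ε : ℕ) : Prop where
  disjoint : Disjoint I U
  card_add : #I + ε + 1 = n
  card_sdiff_le : ∀ x ∈ I, #(Iᶜ \ G.neighborFinset x) ≤ ε

theorem IsIndepSet.card_compl_sdiff_add (hI : G.IsIndepSet (I : Set V)) {x : V}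
    (hx : x ∈ I) : #(Iᶜ \ G.neighborFinset x) + #I + G.degree x = Fintype.card V := by
  have hsub : G.neighborFinset x ⊆ Iᶜ := fun y hy => mem_compl.2 fun hyI => by
    have hxy := (G.mem_neighborFinset x y).1 hy
    exact hI hx hyI hxy.ne hxy
  rw [card_sdiff_of_subset hsub, card_compl, card_neighborFinset_eq_degree]
  have := card_le_card hsub
  rw [card_compl, card_neighborFinset_eq_degree] at this
  have := card_le_univ I
  omega

theorem isCore_of_isIndepSet (hV : Fintype.card V + 2 = 2 * n + t)
    (hδ : ∀ v, n + t ≤ G.degree v + 1) (hn : 1 ≤ n) (hI : G.IsIndepSet (I : Set V))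
    (hIU : Disjoint I U) : G.IsCore U I n (n - 1 - #I) := by
  have key : ∀ x ∈ I, #(Iᶜ \ G.neighborFinset x) + #I + 1 ≤ n := fun x hx => by
    have := hI.card_compl_sdiff_add hx
    have := hδ x
    omega
  refine ⟨hIU, ?_, fun x hx => by have := key x hx; omega⟩
  obtain rfl | ⟨x, hx⟩ := I.eq_empty_or_nonempty
  · simp only [card_empty, tsub_zero, zero_add]
    omega
  · have := key x hx
    omega

variable (G) in
def richVerts (I J : Finset V) (m : ℕ) : Finset V :=
  (I ∪ J)ᶜ.filter fun r =>
    m ≤ #(G.neighborFinset r ∩ I) ∧ m ≤ #(G.neighborFinset r ∩ J)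

theorem richVerts_anti {m m' : ℕ} (h : m ≤ m') : G.richVerts I J m' ⊆ G.richVerts I J m :=
  fun r hr => by
    simp only [richVerts, mem_filter] at hr ⊢
    exact ⟨hr.1, h.trans hr.2.1, h.trans hr.2.2⟩

theorem card_compl_le_card_richVerts_add (I J : Finset V) (m : ℕ) :
    #(I ∪ J)ᶜ ≤ #(G.richVerts I J m) +
      #((I ∪ J)ᶜ.filter fun r => #(G.neighborFinset r ∩ I) < m) +
      #((I ∪ J)ᶜ.filter fun r => #(G.neighborFinset r ∩ J) < m) := by
  refine (card_le_card fun r hr => ?_).trans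
    ((card_union_le _ _).trans (Nat.add_le_add_right (card_union_le _ _) _))
  simp only [richVerts, mem_union, mem_filter, hr, true_and]
  omega

theorem degree_add_one_le {r : V} (hr : r ∉ I ∪ J) :
    G.degree r + 1 ≤
      #(G.neighborFinset r ∩ I) + #(G.neighborFinset r ∩ J) + #(I ∪ J)ᶜ := by
  have hsub : G.neighborFinset r ⊆
      (G.neighborFinset r ∩ I ∪ G.neighborFinset r ∩ J) ∪ (I ∪ J)ᶜ.erase r := by
    intro y hy
    have hne : y ≠ r := (G.ne_of_adj ((G.mem_neighborFinset r y).1 hy)).symm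
    by_cases hyI : y ∈ I <;> by_cases hyJ : y ∈ J <;> simp [hy, hne, hyI, hyJ]
  have h := (card_le_card hsub).trans
    ((card_union_le _ _).trans (Nat.add_le_add_right (card_union_le _ _) _))
  rw [card_erase_of_mem (mem_compl.2 hr), card_neighborFinset_eq_degree] at h
  have : 0 < #(I ∪ J)ᶜ := card_pos.2 ⟨r, mem_compl.2 hr⟩
  omega

namespace IsCore

theorem card_filter_lt_le (hI : G.IsCore U I n ε) {R : Finset V} (hRI : Disjoint R I) {m s : ℕ}
    (h : (ε + s + 1) * (m - 1) + 1 ≤ (s + 1) * #I) :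
    #(R.filter fun r => #(G.neighborFinset r ∩ I) < m) ≤ ε + s := by
  refine card_le_of_card_sdiff_neighborFinset_le (G := G) (fun x hx => ?_) (fun r hr => ?_) h
  · refine (card_le_card (sdiff_subset_sdiff (fun r hr => ?_) subset_rfl)).trans
      (hI.card_sdiff_le x hx)
    exact mem_compl.2 (Finset.disjoint_left.1 hRI (mem_filter.1 hr).1)
  · have := (mem_filter.1 hr).2
    omega

theorem exists_matching_across (hI : G.IsCore U I n ε) (hJU : Disjoint J U) (hIJ : Disjoint I J)
    {r : V} {Ψ : Finset V} (hA : k ≤ #((G.neighborFinset r ∩ I) \ Ψ))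
    (hB : k + ε ≤ #((G.neighborFinset r ∩ J) \ Ψ)) :
    ∃ M : Fin k × Fin 2 → V, G.IsIndexedMatching M ∧
      (∀ x, G.Adj r (M x) ∧ M x ∉ U ∧ M x ∉ Ψ) ∧
      #(univ.image M ∩ I) ≤ k ∧ #(univ.image M ∩ J) ≤ k := by
  have hsub : ∀ X : Finset V, (G.neighborFinset r ∩ X) \ Ψ ⊆ X := fun X =>
    sdiff_subset.trans inter_subset_right
  obtain ⟨M, hM, hMAB⟩ := exists_indexedMatching_of_card_sdiff_le
    (hIJ.mono (hsub I) (hsub J)) hA hB fun x hx => (card_le_card (sdiff_subset_sdiff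
      (fun y hy => mem_compl.2 (Finset.disjoint_right.1 hIJ (hsub J hy))) subset_rfl)).trans
      (hI.card_sdiff_le x (hsub I hx))
  have hcol : ∀ x : Fin k × Fin 2, (x.2 = 0 ∧ M x ∈ (G.neighborFinset r ∩ I) \ Ψ) ∨
      (x.2 = 1 ∧ M x ∈ (G.neighborFinset r ∩ J) \ Ψ) := by
    rintro ⟨j, c⟩
    fin_cases c
    exacts [Or.inl ⟨rfl, (hMAB j).1⟩, Or.inr ⟨rfl, (hMAB j).2⟩]
  refine ⟨M, hM, fun x => ?_, card_image_inter_le M 0 fun x hx => ?_,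
    card_image_inter_le M 1 fun x hx => ?_⟩
  · rcases hcol x with ⟨-, h⟩ | ⟨-, h⟩ <;> simp only [mem_sdiff, mem_inter] at h
    · exact ⟨(G.mem_neighborFinset _ _).1 h.1.1, Finset.disjoint_left.1 hI.disjoint h.1.2, h.2⟩
    · exact ⟨(G.mem_neighborFinset _ _).1 h.1.1, Finset.disjoint_left.1 hJU h.1.2, h.2⟩
  · exact ((hcol x).resolve_right fun h => Finset.disjoint_left.1 hIJ hx (hsub J h.2)).1
  · exact ((hcol x).resolve_left fun h => Finset.disjoint_left.1 hIJ (hsub I h.2) hx).1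

theorem exists_fan_body (hI : G.IsCore U I n ε) (hJ : G.IsCore U J n ε₂)
    (hIJ : Disjoint I J) {r : V} {Ψ : Finset V}
    (hΨI : #(Ψ ∩ I) ≤ k) (hΨJ : #(Ψ ∩ J) ≤ k)
    (ha : k + #(Ψ ∩ I) ≤ #(G.neighborFinset r ∩ I))
    (hb : k + #(Ψ ∩ J) ≤ #(G.neighborFinset r ∩ J))
    (hmid : 2 * k + ε₂ ≤ #(G.neighborFinset r ∩ I) ∨
      2 * k + ε ≤ #(G.neighborFinset r ∩ J)) :
    ∃ M : Fin k × Fin 2 → V, G.IsIndexedMatching M ∧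
      (∀ x, G.Adj r (M x) ∧ M x ∉ U ∧ M x ∉ Ψ) ∧
      #(univ.image M ∩ I) ≤ k ∧ #(univ.image M ∩ J) ≤ k := by
  have hrest : ∀ X : Finset V,
      #(G.neighborFinset r ∩ X) ≤ #((G.neighborFinset r ∩ X) \ Ψ) + #(Ψ ∩ X) := by
    intro X
    have := card_sdiff_add_card_inter (G.neighborFinset r ∩ X) Ψ
    have : #(G.neighborFinset r ∩ X ∩ Ψ) ≤ #(Ψ ∩ X) :=
      card_le_card fun y hy => by simp only [mem_inter] at hy ⊢; tauto
    omega
  have := hrest I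
  have := hrest J
  rcases hmid with h | h
  · obtain ⟨M, hM, hMr, hMJ, hMI⟩ :=
      hJ.exists_matching_across hI.disjoint hIJ.symm (k := k) (Ψ := Ψ) (r := r)
        (by omega) (by omega)
    exact ⟨M, hM, hMr, hMI, hMJ⟩
  · exact hI.exists_matching_across hJ.disjoint hIJ (k := k) (by omega) (by omega)

theorem card_compl_union (hI : G.IsCore U I n ε) (hJ : G.IsCore U J n ε₂) (hIJ : Disjoint I J)
    (hV : Fintype.card V + 2 = 2 * n + t) : #(I ∪ J)ᶜ = t + ε + ε₂ := by
  have := hI.card_add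
  have := hJ.card_add
  rw [card_compl, card_union_of_disjoint hIJ]
  omega

theorem two_mul_add_le_or (hI : G.IsCore U I n ε) (hJ : G.IsCore U J n ε₂) (hIJ : Disjoint I J)
    (hV : Fintype.card V + 2 = 2 * n + t) (hδ : ∀ v, n + t ≤ G.degree v + 1)
    (h : 4 * k + 2 * ε + 2 * ε₂ ≤ n + 1) {r : V} (hr : r ∉ I ∪ J) :
    2 * k + ε₂ ≤ #(G.neighborFinset r ∩ I) ∨
      2 * k + ε ≤ #(G.neighborFinset r ∩ J) := by
  have := G.degree_add_one_le hr
  have := hδ r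
  have := hI.card_compl_union hJ hIJ hV
  omega

theorem le_card_richVerts_add (hI : G.IsCore U I n ε) (hJ : G.IsCore U J n ε₂)
    (hIJ : Disjoint I J) (hV : Fintype.card V + 2 = 2 * n + t) {m s₁ s₂ : ℕ}
    (h₁ : (ε + s₁ + 1) * (m - 1) + 1 ≤ (s₁ + 1) * #I)
    (h₂ : (ε₂ + s₂ + 1) * (m - 1) + 1 ≤ (s₂ + 1) * #J) :
    t ≤ #(G.richVerts I J m) + s₁ + s₂ := by
  have := G.card_compl_le_card_richVerts_add I J m
  have := hI.card_filter_lt_le (R := (I ∪ J)ᶜ)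
    (disjoint_compl_left.mono_right subset_union_left) h₁
  have := hJ.card_filter_lt_le (R := (I ∪ J)ᶜ)
    (disjoint_compl_left.mono_right subset_union_right) h₂
  have := hI.card_compl_union hJ hIJ hV
  omega

end IsCore

theorem sum_card_nbhdEdges {m : ℕ} (M : Fin m × Fin 2 → V) (S : Finset V) :
    ∑ u ∈ S, #(G.nbhdEdges M u) =
      ∑ j, #(G.neighborFinset (M (j, 0)) ∩ G.neighborFinset (M (j, 1)) ∩ S) := by
  refine (sum_card_bipartiteAbove_eq_sum_card_bipartiteBelow
    (r := fun u j => G.Adj u (M (j, 0)) ∧ G.Adj u (M (j, 1)))).trans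
    (sum_congr rfl fun j _ => congrArg card ?_)
  ext u
  simp only [bipartiteBelow, mem_filter, mem_inter, mem_neighborFinset, adj_comm]
  tauto

namespace IsFanPacking

variable {P : Finset (Option (Fin k × Fin 2) → V)}

theorem exists_core (hP : G.IsFanPacking P) (hV : Fintype.card V + 2 = 2 * n + t)
    (hδ : ∀ v, n + t ≤ G.degree v + 1) (hn : 1 ≤ n) (hnot : ¬G.HasFanPacking k (#P + 1))
    {v : V} (hv : v ∉ packingVerts P) :
    ∃ (I : Finset V) (ε : ℕ), G.IsIndepSet (I : Set V) ∧ I ⊆ G.neighborFinset v ∧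
      G.IsCore (packingVerts P) I n ε ∧
      ε + t + 2 ≤ 2 * k + #(G.neighborFinset v ∩ packingVerts P) := by
  rcases G.exists_indexedMatching_or_isIndepSet k (G.neighborFinset v \ packingVerts P) with
    ⟨M, hM, hMs⟩ | ⟨I, hIs, hI, hcard⟩
  · refine absurd (hP.hasFanPacking_succ_of_fan hM (fun x => ?_) hv fun x => ?_) hnot
    · exact (G.mem_neighborFinset _ _).1 (mem_sdiff.1 (hMs x)).1
    · exact (mem_sdiff.1 (hMs x)).2
  · have hcore := isCore_of_isIndepSet hV hδ hn hI (disjoint_of_subset_left hIs sdiff_disjoint)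
    refine ⟨I, _, hI, hIs.trans sdiff_subset, hcore, ?_⟩
    have := card_sdiff_add_card_inter (G.neighborFinset v) (packingVerts P)
    have := hδ v
    have := hcore.card_add
    rw [card_neighborFinset_eq_degree] at *
    omega

theorem exists_disjoint_cores (hA : Admissible k t n) (hV : Fintype.card V + 2 = 2 * n + t)
    (hδ : ∀ v, n + t ≤ G.degree v + 1) (hP : G.IsFanPacking P) (hpt : #P + 1 ≤ t)
    (hnot : ¬G.HasFanPacking k (#P + 1)) {v : V} (hv : v ∉ packingVerts P) :
    ∃ I J ε ε₂, G.IsCore (packingVerts P) I n ε ∧ G.IsCore (packingVerts P) J n ε₂ ∧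
      Disjoint I J ∧ ε + t + 2 ≤ 2 * k + #(G.neighborFinset v ∩ packingVerts P) ∧
      ε₂ + t + 2 ≤ 2 * k + (2 * k + 1) * #P := by
  have hU : ∀ w, #(G.neighborFinset w ∩ packingVerts P) ≤ (2 * k + 1) * #P := fun w =>
    (card_le_card inter_subset_right).trans (by rw [hP.card_packingVerts, mul_comm])
  obtain ⟨I, ε, hIind, -, hI, hε⟩ := hP.exists_core hV hδ hA.one_le_n hnot hv
  obtain ⟨x, hx⟩ : I.Nonempty := by
    have := hA.succ_mul_pred_add_le hpt (hε.trans (by have := hU v; omega))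
    have := hI.card_add
    rw [← card_pos]
    omega
  obtain ⟨J, ε₂, -, hJx, hJ, hε₂⟩ :=
    hP.exists_core hV hδ hA.one_le_n hnot (Finset.disjoint_left.1 hI.disjoint hx)
  refine ⟨I, J, ε, ε₂, hI, hJ, Finset.disjoint_left.2 fun y hyI hyJ => ?_, hε,
    hε₂.trans (by have := hU x; omega)⟩
  have hxy := (G.mem_neighborFinset x y).1 (hJx hyJ)
  exact hIind hx hyI hxy.ne hxy

theorem hasFanPacking_succ_of_rich_pair (hP : G.IsFanPacking P)
    (hI : G.IsCore (packingVerts P) I n ε) (hJ : G.IsCore (packingVerts P) J n ε₂)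
    (hIJ : Disjoint I J) (hmid : ∀ r ∉ I ∪ J,
      2 * k + ε₂ ≤ #(G.neighborFinset r ∩ I) ∨ 2 * k + ε ≤ #(G.neighborFinset r ∩ J))
    {g₀ : Option (Fin k × Fin 2) → V} (hg₀ : g₀ ∈ P) {u u' : V}
    (hu : u ∈ G.richVerts I J (2 * k)) (hu' : u' ∈ G.richVerts I J k)
    (hug : u ∈ univ.image g₀) (hu'g : u' ∈ univ.image g₀) (hne : u ≠ u') :
    G.HasFanPacking k (#P + 1) := by
  simp only [richVerts, mem_filter, mem_compl] at hu hu'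
  obtain ⟨M₁, hM₁, hM₁r, hM₁I, hM₁J⟩ := hI.exists_fan_body hJ hIJ (Ψ := ∅)
    (by simp) (by simp) (by simpa using hu'.2.1) (by simpa using hu'.2.2) (hmid u' hu'.1)
  obtain ⟨M₂, hM₂, hM₂r, -⟩ := hI.exists_fan_body hJ hIJ (Ψ := univ.image M₁)
    hM₁I hM₁J (by omega) (by omega) (hmid u hu.1)
  exact hP.hasFanPacking_succ_of_split hg₀ hu'g hug hne.symm hM₁ hM₂ (fun x => (hM₁r x).1)
    (fun x => (hM₂r x).1) (fun x => (hM₁r x).2.1) (fun x => (hM₂r x).2.1)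
    fun x y h => (hM₂r y).2.2 (h ▸ mem_image_of_mem M₁ (mem_univ x))

theorem hasFanPacking_succ_of_sparse (hA : Admissible k t n)
    (hV : Fintype.card V + 2 = 2 * n + t) (hδ : ∀ v, n + t ≤ G.degree v + 1)
    (hP : G.IsFanPacking P) (hpt : #P + 1 ≤ t) (hI : G.IsCore (packingVerts P) I n ε)
    (hJ : G.IsCore (packingVerts P) J n ε₂) (hIJ : Disjoint I J)
    (hε : ε + t + 2 ≤ 2 * k + (k + 1) * #P)
    (hε₂ : ε₂ + t + 2 ≤ 2 * k + (2 * k + 1) * #P) :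
    G.HasFanPacking k (#P + 1) := by
  have hmid := fun r =>
    hI.two_mul_add_le_or hJ hIJ hV hδ (hA.four_mul_add_le hpt hε hε₂) (r := r)
  have := hI.card_add
  have := hJ.card_add
  have hrich : t ≤ #(G.richVerts I J k) := by
    have hε' : ε + t + 2 ≤ 2 * k + (2 * k + 1) * #P :=
      hε.trans (Nat.add_le_add_left (Nat.mul_le_mul_right _ (by omega)) _)
    have := hA.succ_mul_pred_add_le hpt hε'
    have := hA.succ_mul_pred_add_le hpt hε₂
    have := hI.le_card_richVerts_add hJ hIJ hV (m := k) (s₁ := 0) (s₂ := 0)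
      (by simp only [add_zero, zero_add, one_mul]; omega)
      (by simp only [add_zero, zero_add, one_mul]; omega)
    omega
  by_cases hout : ∃ r ∈ G.richVerts I J k, r ∉ packingVerts P
  · obtain ⟨r, hr, hrU⟩ := hout
    simp only [richVerts, mem_filter, mem_compl] at hr
    obtain ⟨M, hM, hMr, -⟩ := hI.exists_fan_body hJ hIJ (Ψ := ∅) (by simp) (by simp)
      (by simpa using hr.2.1) (by simpa using hr.2.2) (hmid r hr.1)
    exact hP.hasFanPacking_succ_of_fan hM (fun x => (hMr x).1) hrU fun x => (hMr x).2.1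
  push Not at hout
  have hp : 1 ≤ #P := by
    have := (card_le_card hout).trans hP.card_packingVerts.le
    rcases Nat.eq_zero_or_pos #P with h | h
    · rw [h] at this
      omega
    · exact h
  have hrich₂ : t ≤ #(G.richVerts I J (2 * k)) + 0 + 1 := by
    have := hA.succ_mul_two_mul_pred_add_le hp hpt hε
    have := hA.add_two_mul_two_mul_pred_add_le hp hpt hε₂
    exact hI.le_card_richVerts_add hJ hIJ hV (by simp only [add_zero, zero_add, one_mul]; omega)
      (show (ε₂ + 2) * (2 * k - 1) + 1 ≤ 2 * #J by omega)
  obtain ⟨g₀, hg₀, u, hu, u', hu', hne⟩ := exists_mem_ne_of_card_lt hP.pairwiseDisjoint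
    (richVerts_anti (show k ≤ 2 * k by omega)) hout (by omega) (by omega)
  exact hP.hasFanPacking_succ_of_rich_pair hI hJ hIJ hmid hg₀ (mem_inter.1 hu).1
    (mem_inter.1 hu').1 (mem_inter.1 hu).2 (mem_inter.1 hu').2 hne

theorem add_two_le_card_inter (hP : G.IsFanPacking P)
    (hU : ∀ v ∉ packingVerts P, (k + 1) * #P < #(G.neighborFinset v ∩ packingVerts P))
    {a b : V} (ha : a ∉ packingVerts P) (hb : b ∉ packingVerts P) :
    #P + 2 ≤ #(G.neighborFinset a ∩ G.neighborFinset b ∩ packingVerts P) := by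
  have hinter : G.neighborFinset a ∩ G.neighborFinset b ∩ packingVerts P =
      (G.neighborFinset a ∩ packingVerts P) ∩ (G.neighborFinset b ∩ packingVerts P) := by
    ext
    simp only [mem_inter]
    tauto
  have := card_inter_add_card_union (G.neighborFinset a ∩ packingVerts P)
    (G.neighborFinset b ∩ packingVerts P)
  have : #(G.neighborFinset a ∩ packingVerts P ∪ G.neighborFinset b ∩ packingVerts P) ≤
      #(packingVerts P) := card_le_card (union_subset inter_subset_right inter_subset_right)
  have := hU a ha
  have := hU b hb
  have : (k + 1) * #P + (k + 1) * #P = #P * (2 * k + 1) + #P := by ring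
  rw [hinter]
  rw [hP.card_packingVerts] at *
  omega

theorem mul_add_two_le (hP : G.IsFanPacking P) {m : ℕ} (hm : 2 * k - 1 ≤ m)
    {M : Fin m × Fin 2 → V} (hMU : ∀ x, M x ∉ packingVerts P)
    (hU : ∀ v ∉ packingVerts P, (k + 1) * #P < #(G.neighborFinset v ∩ packingVerts P))
    (hfew : ∀ g ∈ P, ∀ u ∈ univ.image g, ∀ u' ∈ univ.image g, u ≠ u' →
      #(G.nbhdEdges M u) < 2 * k ∨ #(G.nbhdEdges M u') < 2 * k) :
    m * (#P + 2) ≤ #P * (m + 2 * k * (2 * k - 1)) := by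
  have hfan : ∀ g ∈ P,
      ∑ u ∈ univ.image g, #(G.nbhdEdges M u) ≤ m + 2 * k * (2 * k - 1) := by
    intro g hg
    have := sum_le_of_forall_ne_le (f := fun u => #(G.nbhdEdges M u)) hm
      (fun u _ => (card_le_univ _).trans (by simp)) fun u hu u' hu' hne =>
      (hfew g hg u hu u' hu' hne).imp (fun h => by omega) fun h => by omega
    rwa [card_image_of_injective _ (hP.isFan g hg).1, card_univ, Fintype.card_option,
      Fintype.card_prod, Fintype.card_fin, Fintype.card_fin, Nat.add_sub_cancel,
      mul_comm k 2] at this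
  calc m * (#P + 2) = ∑ _j : Fin m, (#P + 2) := by simp
    _ ≤ ∑ j,
          #(G.neighborFinset (M (j, 0)) ∩ G.neighborFinset (M (j, 1)) ∩ packingVerts P) :=
        sum_le_sum fun j _ => hP.add_two_le_card_inter hU (hMU _) (hMU _)
    _ = ∑ u ∈ packingVerts P, #(G.nbhdEdges M u) := (sum_card_nbhdEdges M _).symm
    _ = ∑ g ∈ P, ∑ u ∈ univ.image g, #(G.nbhdEdges M u) := sum_biUnion hP.pairwiseDisjoint
    _ ≤ ∑ _g ∈ P, (m + 2 * k * (2 * k - 1)) := sum_le_sum hfan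
    _ = #P * (m + 2 * k * (2 * k - 1)) := by simp

theorem hasFanPacking_succ_of_dense (hA : Admissible k t n) (hP : G.IsFanPacking P)
    (hp : 1 ≤ #P) (hpt : #P + 1 ≤ t) (hI : G.IsCore (packingVerts P) I n ε)
    (hJ : G.IsCore (packingVerts P) J n ε₂) (hIJ : Disjoint I J)
    (hε : ε + t + 2 ≤ 2 * k + (2 * k + 1) * #P)
    (hε₂ : ε₂ + t + 2 ≤ 2 * k + (2 * k + 1) * #P)
    (hU : ∀ v ∉ packingVerts P, (k + 1) * #P < #(G.neighborFinset v ∩ packingVerts P)) :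
    G.HasFanPacking k (#P + 1) := by
  have := hA.mul_two_mul_pred_mul_add_le hp hpt hε hε₂
  have := hI.card_add
  have := hJ.card_add
  -- `mul_add_two_le` below caps such matchings at `k (2k - 1) #P` edges
  obtain ⟨M, hM, hMIJ⟩ := exists_indexedMatching_of_card_sdiff_le
    (k := k * (2 * k - 1) * #P + 1) hIJ (by omega) (by omega) fun x hx =>
      (card_le_card (sdiff_subset_sdiff (fun y hy => mem_compl.2
        (Finset.disjoint_right.1 hIJ hy)) subset_rfl)).trans (hI.card_sdiff_le x hx)
  have hMU : ∀ x, M x ∉ packingVerts P := by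
    rintro ⟨j, c⟩
    fin_cases c
    exacts [Finset.disjoint_left.1 hI.disjoint (hMIJ j).1,
      Finset.disjoint_left.1 hJ.disjoint (hMIJ j).2]
  by_contra hnot
  have hm : 2 * k - 1 ≤ k * (2 * k - 1) * #P + 1 := by
    have := Nat.le_mul_of_pos_left (2 * k - 1) hA.one_le_k
    have := Nat.le_mul_of_pos_right (k * (2 * k - 1)) hp
    omega
  have hcount := hP.mul_add_two_le hm hMU hU fun g hg u hu u' hu' hne => by
    by_contra! h
    exact hnot (hP.hasFanPacking_succ_of_nbhdEdges hM hMU hg hu hu' hne h.1 h.2)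
  obtain ⟨θ, hθ⟩ : ∃ θ, 2 * k - 1 = θ := ⟨_, rfl⟩
  rw [hθ] at hcount
  nlinarith

theorem hasFanPacking_succ (hA : Admissible k t n) (hV : Fintype.card V + 2 = 2 * n + t)
    (hδ : ∀ v, n + t ≤ G.degree v + 1) (hP : G.IsFanPacking P) (hpt : #P + 1 ≤ t) :
    G.HasFanPacking k (#P + 1) := by
  by_contra hnot
  by_cases hsparse :
      ∃ v ∉ packingVerts P, #(G.neighborFinset v ∩ packingVerts P) ≤ (k + 1) * #P
  · obtain ⟨v, hv, hq⟩ := hsparse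
    obtain ⟨I, J, ε, ε₂, hI, hJ, hIJ, hε, hε₂⟩ :=
      hP.exists_disjoint_cores hA hV hδ hpt hnot hv
    exact hnot (hP.hasFanPacking_succ_of_sparse hA hV hδ hpt hI hJ hIJ (by omega) hε₂)
  push Not at hsparse
  obtain ⟨v, hv⟩ : ∃ v, v ∉ packingVerts P := by
    by_contra! hall
    have := card_le_card fun v (_ : v ∈ univ) => hall v
    rw [card_univ, hP.card_packingVerts] at this
    have := hA.mul_two_mul_add_one_add_three_le hpt
    omega
  have hp : 1 ≤ #P := by
    have := hsparse v hv
    rcases Nat.eq_zero_or_pos #P with h | h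
    · simp [packingVerts, card_eq_zero.1 h] at this
    · exact h
  obtain ⟨I, J, ε, ε₂, hI, hJ, hIJ, hε, hε₂⟩ :=
    hP.exists_disjoint_cores hA hV hδ hpt hnot hv
  have hq := (card_le_card (inter_subset_right (s₁ := G.neighborFinset v))).trans
    hP.card_packingVerts.le
  exact hnot (hP.hasFanPacking_succ_of_dense hA hp hpt hI hJ hIJ
    (hε.trans (by rw [mul_comm] at hq; omega)) hε₂ hsparse)

end IsFanPacking

theorem hasFanPacking_of_minDegree (hA : Admissible k t n) (hV : Fintype.card V + 2 = 2 * n + t)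
    (hδ : ∀ v, n + t ≤ G.degree v + 1) : G.HasFanPacking k t := by
  suffices ∀ m ≤ t, G.HasFanPacking k m from this t le_rfl
  intro m hm
  induction m with
  | zero => exact hasFanPacking_zero
  | succ m ih =>
    obtain ⟨P, hP, rfl⟩ := ih (by omega)
    exact hP.hasFanPacking_succ hA hV hδ hm

end Host

theorem containsCopy_star_of_le_degree {V : Type*} [Fintype V] [DecidableEq V] {G : SimpleGraph V}
    [DecidableRel G.Adj] {m : ℕ} {v : V} (h : m ≤ G.degree v) :
    G.ContainsCopy (completeBipartiteGraph (Fin 1) (Fin m)) := by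
  obtain ⟨σ, hσ, hσv⟩ := exists_injective_forall_mem_of_card_le
    (fun _ : Fin m => G.neighborFinset v) fun _ => by simpa using h
  have hadj : ∀ i, G.Adj v (σ i) := fun i => (G.mem_neighborFinset _ _).1 (hσv i)
  refine ⟨Sum.elim (fun _ => v) σ, ?_, ?_⟩
  · exact Function.injective_of_subsingleton _ |>.sumElim hσ fun _ i h => (hadj i).ne h
  · rintro (a | a) (b | b) hab
    · simp at hab
    · exact hadj b
    · exact (hadj a).symm
    · simp at hab

/-! ### The lower-bound colouring -/

def twoCliques (n t : ℕ) : SimpleGraph ((Fin 2 × Fin (n - 1)) ⊕ Fin (t - 1)) :=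
  copies 2 ⊤ ⊕g ⊥

theorem not_containsCopy_star {n t : ℕ} (hn : 2 ≤ n ∨ t = 1) :
    ¬(twoCliques n t).ContainsCopy (completeBipartiteGraph (Fin 1) (Fin (n - 1))) := by
  rw [twoCliques]
  rintro ⟨f, hf, hadj⟩
  have hleaf : ∀ i, (copies 2 ⊤ ⊕g ⊥).Adj (f (.inl 0)) (f (.inr i)) := fun i =>
    hadj (by simp)
  rcases hc : f (.inl 0) with c | c
  · have hmem : ∀ i, f (.inr i) ∈ (univ.erase c.2).image fun b => Sum.inl (c.1, b) := by
      intro i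
      have := hleaf i
      rw [hc] at this
      rcases hfi : f (.inr i) with y | y <;> rw [hfi] at this
      · simp only [SimpleGraph.sum_adj, copies, top_adj] at this
        simp only [mem_image, mem_erase, mem_univ, and_true, Sum.inl.injEq]
        exact ⟨y.2, this.2.symm, Prod.ext this.1 rfl⟩
      · simp at this
    have := card_le_card_of_injOn (s := univ) (fun i => f (.inr i)) (fun i _ => hmem i)
      fun i _ j _ h => Sum.inr_injective (hf h)
    rw [card_univ, Fintype.card_fin] at this
    have := this.trans card_image_le
    rw [card_erase_of_mem (mem_univ _), card_univ, Fintype.card_fin] at this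
    have := c.2.pos
    omega
  · rcases hn with hn | rfl
    · have := hleaf ⟨0, by omega⟩
      rw [hc] at this
      rcases hfi : f (.inr ⟨0, by omega⟩) with y | y <;> rw [hfi] at this <;> simp at this
    · exact c.elim0

theorem not_containsCopy_compl_copies_fan {n t k : ℕ} (hk : 1 ≤ k) (ht : 1 ≤ t) :
    ¬(twoCliques n t)ᶜ.ContainsCopy (copies t (fan k)) := by
  rw [twoCliques]
  rintro ⟨f, hf, hadj⟩
  have hright : ∀ i, ∃ y j, f (i, y) = .inr j := by
    intro i
    by_contra! hleft
    have hs : ∀ y, ∃ a, f (i, y) = .inl a := fun y => by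
      rcases h : f (i, y) with a | a
      · exact ⟨a, rfl⟩
      · exact absurd h (hleft y a)
    choose s hs using hs
    have hside : ∀ y z, (fan k).Adj y z → (s y).1 ≠ (s z).1 := by
      intro y z hyz hyz'
      have h := (compl_adj _ _ _).1
        (hadj (show (copies t (fan k)).Adj (i, y) (i, z) from ⟨rfl, hyz⟩))
      rw [hs, hs] at h
      refine h.2 ?_
      simp only [sum_adj, copies, top_adj]
      exact ⟨hyz', fun h2 => h.1 (by rw [Prod.ext hyz' h2])⟩
    have h₁ := hside none (some (⟨0, hk⟩, 0)) (by simp [fan])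
    have h₂ := hside none (some (⟨0, hk⟩, 1)) (by simp [fan])
    have h₃ := hside (some (⟨0, hk⟩, 0)) (some (⟨0, hk⟩, 1)) (by simp [fan])
    omega
  choose y j hj using hright
  have := Fintype.card_le_of_injective j fun i i' h =>
    congrArg Prod.fst (hf ((hj i).trans (h ▸ (hj i').symm)))
  simp only [Fintype.card_fin] at this
  omega

end SimpleGraph

theorem ramseyProp.containsCopy_or {α β W : Type*} {G : SimpleGraph α} {H : SimpleGraph β}
    {N : ℕ} (h : ramseyProp G H N) {f : Fin N → W} (hf : Function.Injective f)
    (red : SimpleGraph W) :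
    red.ContainsCopy G ∨ redᶜ.ContainsCopy H := by
  rcases h (red.comap f) with ⟨g, hg, hadj⟩ | ⟨g, hg, hadj⟩
  · exact Or.inl ⟨f ∘ g, hf.comp hg, fun a b hab => hadj hab⟩
  · refine Or.inr ⟨f ∘ g, hf.comp hg, fun a b hab => ?_⟩
    obtain ⟨hne, hnadj⟩ := (SimpleGraph.compl_adj _ _ _).1 (hadj hab)
    exact (SimpleGraph.compl_adj _ _ _).2 ⟨hf.ne hne, hnadj⟩

theorem ramseyProp.mono {α β : Type*} {G : SimpleGraph α} {H : SimpleGraph β} {M N : ℕ}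
    (h : ramseyProp G H M) (hMN : M ≤ N) : ramseyProp G H N := fun red =>
  h.containsCopy_or (Fin.castLE_injective hMN) red

theorem ramseyProp_star_copies_fan {k t n : ℕ} (hA : Admissible k t n) :
    ramseyProp (completeBipartiteGraph (Fin 1) (Fin (n - 1))) (copies t (fan k))
      (2 * n + t - 2) := by
  classical
  intro red
  by_cases hstar : ∃ v, n - 1 ≤ red.degree v
  · obtain ⟨v, hv⟩ := hstar
    exact Or.inl (SimpleGraph.containsCopy_star_of_le_degree hv)
  push Not at hstar
  have hn := hA.one_le_n
  refine Or.inr (hasFanPacking_of_minDegree hA (by simp only [Fintype.card_fin]; omega)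
    fun v => ?_).containsCopy
  have := hstar v
  rw [degree_compl, Fintype.card_fin]
  omega

theorem not_ramseyProp_star_copies_fan {k t n : ℕ} (hk : 1 ≤ k) (ht : 1 ≤ t) (hn : 1 ≤ n)
    (hnt : 2 ≤ n ∨ t = 1) :
    ¬ramseyProp (completeBipartiteGraph (Fin 1) (Fin (n - 1))) (copies t (fan k))
      (2 * n + t - 3) := by
  intro h
  have hcard : Fintype.card ((Fin 2 × Fin (n - 1)) ⊕ Fin (t - 1)) = 2 * n + t - 3 := by
    simp only [Fintype.card_sum, Fintype.card_prod, Fintype.card_fin]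
    omega
  rcases h.containsCopy_or (Fintype.equivFinOfCardEq hcard).symm.injective
      (SimpleGraph.twoCliques n t) with h | h
  · exact SimpleGraph.not_containsCopy_star hnt h
  · exact SimpleGraph.not_containsCopy_compl_copies_fan hk ht h

/-- The strengthened form of Theorem 6: `r(K_{1,n−1}, tF_k) = 2n + t − 2` whenever
`n ≥ max{12kt + 2k − 19, 10kt + 2k − 13, 4k²t − 2k² − kt − t + 1}`. -/
theorem star_vs_tFan_strong (k t n : ℕ) (hk : 1 ≤ k) (ht : 1 ≤ t)
    (hn1 : 12 * (k : ℤ) * (t : ℤ) + 2 * (k : ℤ) - 19 ≤ (n : ℤ))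
    (hn2 : 10 * (k : ℤ) * (t : ℤ) + 2 * (k : ℤ) - 13 ≤ (n : ℤ))
    (hn3 : 4 * (k : ℤ) ^ 2 * (t : ℤ) - 2 * (k : ℤ) ^ 2 - (k : ℤ) * (t : ℤ) - (t : ℤ) + 1
      ≤ (n : ℤ)) :
    ramseyNumber (completeBipartiteGraph (Fin 1) (Fin (n - 1))) (copies t (fan k)) =
      2 * n + t - 2 := by
  have hA : Admissible k t n := ⟨hk, ht, hn1, hn2, hn3⟩
  have hupper := ramseyProp_star_copies_fan hA
  refine le_antisymm (Nat.sInf_le hupper) (le_csInf ⟨_, hupper⟩ fun m hm => ?_)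
  by_contra! hlt
  exact not_ramseyProp_star_copies_fan hk ht hA.one_le_n hA.two_le_n_or_t_eq_one
    (hm.mono (by omega))
end

section
/- Let G be a graph on n ≥ 2 vertices with no isolated vertex, let v be a vertex of G of minimum degree δ = δ(G), and let k be a positive integer. Then r(G, F_k) ≤ max{ r(G − v, F_k), δ·(r(G, kK_2) − 1) + n }, where G − v denotes the graph obtained from G by deleting v. -/
open SimpleGraph

/-!
Embed `G - v` in red. If some vertex outside the embedding is red to the images of all
neighbours of `v`, the embedding extends to a red `G`. Otherwise each of the at least
`N - (n - 1)` outside vertices is blue to the image of some neighbour of `v`, so by pigeonhole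
some such image `w` is blue to `r(G, kK₂)` of them; a blue `kK₂` among these, together with `w`,
is a blue `F_k`. Induction on `n` with the same step shows that `r(G, F_k)` is finite, while
`r(G, kK₂) ≤ 2k + n` because blue edges can be split off one at a time until the red graph is
complete.
-/

namespace SimpleGraph

variable {V α β : Type*}

theorem containsCopy_iff_isContained_s8 {host : SimpleGraph β} {G : SimpleGraph α} :
    host.ContainsCopy G ↔ G ⊑ host :=
  ⟨fun ⟨f, hf, hadj⟩ => ⟨⟨⟨f, fun h => hadj h⟩, hf⟩⟩,
    fun ⟨f⟩ => ⟨f, f.injective, fun _ _ h => f.toHom.map_adj h⟩⟩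

theorem compl_induce (G : SimpleGraph V) (s : Set V) : (G.induce s)ᶜ = Gᶜ.induce s := by
  ext x y
  simp [Subtype.ext_iff]

theorem isContained_of_copy_induce_ne {G : SimpleGraph V} {B : SimpleGraph β} {v : V}
    (f : Copy (G.induce {w | w ≠ v}) B) {u : β} (hu : ∀ x, f x ≠ u)
    (hadj : ∀ x : {w | w ≠ v}, G.Adj v x → B.Adj u (f x)) : G ⊑ B := by
  classical
  let φ : V → β := fun x => if h : x = v then u else f ⟨x, h⟩
  refine ⟨⟨⟨φ, fun {a b} hab => ?_⟩, fun a b hab => ?_⟩⟩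
  · by_cases ha : a = v <;> by_cases hb : b = v
    · simp_all
    · simpa [φ, ha, hb] using (hadj ⟨b, hb⟩ (ha ▸ hab))
    · simpa [φ, ha, hb] using (hadj ⟨a, ha⟩ (hb ▸ hab.symm)).symm
    · simpa [φ, ha, hb] using
        f.toHom.map_adj (show (G.induce {w | w ≠ v}).Adj ⟨a, ha⟩ ⟨b, hb⟩ from hab)
  · by_cases ha : a = v <;> by_cases hb : b = v
    · simp_all
    · exact absurd (by simpa [φ, ha, hb] using hab.symm) (hu ⟨b, hb⟩)
    · exact absurd (by simpa [φ, ha, hb] using hab) (hu ⟨a, ha⟩)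
    · exact congrArg Subtype.val
        (f.injective (a₁ := ⟨a, ha⟩) (a₂ := ⟨b, hb⟩) (by simpa [φ, ha, hb] using hab))

theorem fan_adj_some_iff {k : ℕ} {p q : Fin k × Fin 2} :
    (fan k).Adj (some p) (some q) ↔ (copies k (⊤ : SimpleGraph (Fin 2))).Adj p q := by
  obtain ⟨i, a⟩ := p
  obtain ⟨j, b⟩ := q
  simp only [fan, copies, fromRel_adj, top_adj]
  aesop

theorem fan_isContained_of_subset_neighborSet {k : ℕ} {B : SimpleGraph β} {w : β} {s : Set β}
    (hs : s ⊆ B.neighborSet w) (h : copies k (⊤ : SimpleGraph (Fin 2)) ⊑ B.induce s) :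
    fan k ⊑ B := by
  obtain ⟨f⟩ := h
  have hw : ∀ p, B.Adj w (f p) := fun p => hs (f p).2
  refine ⟨⟨⟨fun o => o.elim w (fun p => (f p : β)), fun {o o'} hadj => ?_⟩, ?_⟩⟩
  · rcases o with _ | p <;> rcases o' with _ | q
    · exact absurd rfl hadj.ne
    · exact hw q
    · exact (hw p).symm
    · exact f.toHom.map_adj (fan_adj_some_iff.1 hadj)
  · rintro (_ | p) (_ | q) h
    · rfl
    · exact absurd h (hw q).ne
    · exact absurd h.symm (hw p).ne
    · exact congrArg some (f.injective (Subtype.ext h))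

theorem copies_succ_isContained {k : ℕ} {H : SimpleGraph α} {B : SimpleGraph β} {s : Set β}
    (h : copies k H ⊑ B.induce s) (g : Copy H B) (hg : ∀ a, g a ∉ s) :
    copies (k + 1) H ⊑ B := by
  obtain ⟨f⟩ := h
  refine ⟨⟨⟨fun p => Fin.lastCases (g p.2) (fun i => (f (i, p.2) : β)) p.1,
    fun {p q} hadj => ?_⟩, ?_⟩⟩
  · obtain ⟨i, a⟩ := p
    obtain ⟨j, b⟩ := q
    obtain ⟨rfl, hab⟩ := hadj
    induction i using Fin.lastCases with
    | last => simpa using g.toHom.map_adj hab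
    | cast i =>
      simpa using f.toHom.map_adj (show (copies k H).Adj (i, a) (i, b) from ⟨rfl, hab⟩)
  · rintro ⟨i, a⟩ ⟨j, b⟩ h
    induction i using Fin.lastCases with
    | last =>
      induction j using Fin.lastCases with
      | last => simpa using g.injective (by simpa using h)
      | cast j =>
        simp only [RelHom.coeFn_mk, Fin.lastCases_last, Fin.lastCases_castSucc] at h
        exact absurd (h ▸ (f (j, b)).2) (hg a)
    | cast i =>
      induction j using Fin.lastCases with
      | last =>
        simp only [RelHom.coeFn_mk, Fin.lastCases_last, Fin.lastCases_castSucc] at h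
        exact absurd (h ▸ (f (i, a)).2) (hg b)
      | cast j =>
        obtain ⟨rfl, rfl⟩ := Prod.ext_iff.1 (f.injective (Subtype.ext (by simpa using h)))
        rfl

theorem exists_copy_top_two_of_adj {B : SimpleGraph β} {x y : β} (h : B.Adj x y) :
    ∃ g : Copy (⊤ : SimpleGraph (Fin 2)) B, ∀ a, g a = x ∨ g a = y := by
  refine ⟨⟨⟨![x, y], fun {a b} hab => ?_⟩, fun a b hab => ?_⟩, fun a => ?_⟩
  rotate_left 2
  · fin_cases a
    exacts [Or.inl rfl, Or.inr rfl]
  all_goals fin_cases a <;> fin_cases b <;> simp_all [h.symm, h.ne, h.ne.symm]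

end SimpleGraph

section

open Finset

variable {V α β γ : Type*} {G : SimpleGraph α} {H : SimpleGraph β} {N : ℕ}

theorem Finset.exists_lt_card_filter_of_forall_exists {ι κ : Type*} {U : Finset ι}
    {D : Finset κ} {R : ι → κ → Prop} [DecidableRel R] (h : ∀ u ∈ U, ∃ d ∈ D, R u d) {m : ℕ}
    (hm : #D * m < #U) : ∃ d ∈ D, m < #{u ∈ U | R u d} := by
  classical
  obtain ⟨u, hu⟩ := card_pos.1 ((Nat.zero_le _).trans_lt hm)
  obtain ⟨d, -⟩ := h u hu
  have : Nonempty κ := ⟨d⟩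
  choose! c hcD hcR using h
  obtain ⟨d, hd, hlt⟩ := exists_lt_card_fiber_of_mul_lt_card_of_maps_to hcD hm
  refine ⟨d, hd, hlt.trans_le (card_le_card fun u hu => ?_)⟩
  rw [mem_filter] at hu ⊢
  exact ⟨hu.1, hu.2 ▸ hcR u hu.1⟩

theorem ramseyProp_iff :
    ramseyProp G H N ↔ ∀ red : SimpleGraph (Fin N), G ⊑ red ∨ H ⊑ redᶜ := by
  simp only [ramseyProp, containsCopy_iff_isContained_s8]

theorem ramseyProp.isContained_or (h : ramseyProp G H N) [Fintype γ] (hN : N ≤ Fintype.card γ)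
    (red : SimpleGraph γ) : G ⊑ red ∨ H ⊑ redᶜ := by
  obtain ⟨e⟩ : Nonempty (Fin N ↪ γ) := Function.Embedding.nonempty_of_card_le (by simpa using hN)
  exact (ramseyProp_iff.1 h (red.comap e)).imp (·.trans (Embedding.comap e red).isContained)
    (·.trans (Embedding.complEquiv (Embedding.comap e red)).isContained)

theorem ramseyProp.isContained_or_induce (h : ramseyProp G H N) (red : SimpleGraph γ)
    {s : Finset γ} (hs : N ≤ #s) : G ⊑ red ∨ H ⊑ redᶜ.induce s :=
  (h.isContained_or (by simpa using hs) (red.induce s)).imp (·.trans ⟨Copy.induce _ _⟩)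
    (compl_induce red s ▸ ·)

theorem isContained_or_copies_top_two_isContained_compl [Fintype V] [Fintype γ]
    (G : SimpleGraph V) (k : ℕ) (red : SimpleGraph γ)
    (h : 2 * k + Fintype.card V ≤ Fintype.card γ) :
    G ⊑ red ∨ copies k (⊤ : SimpleGraph (Fin 2)) ⊑ redᶜ := by
  classical
  induction k generalizing γ with
  | zero => exact Or.inr IsContained.of_isEmpty
  | succ k ih =>
    by_cases hblue : ∃ x y, redᶜ.Adj x y
    · obtain ⟨x, y, hxy⟩ := hblue
      obtain ⟨g, hg⟩ := exists_copy_top_two_of_adj hxy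
      set s : Finset γ := {x, y}ᶜ
      have hs : 2 * k + Fintype.card V ≤ Fintype.card s := by
        simp only [s, Fintype.card_coe, card_compl, card_pair hxy.ne]
        omega
      rcases ih (red.induce s) hs with hG | hk
      · exact Or.inl (hG.trans ⟨Copy.induce _ _⟩)
      · refine Or.inr (copies_succ_isContained (compl_induce red s ▸ hk) g fun a => ?_)
        rcases hg a with ha | ha <;> simp [s, ha]
    · refine Or.inl ((isContained_top_iff.2 ?_).mono_right fun x y hxy => ?_)
      · exact Function.Embedding.nonempty_of_card_le (by omega)
      · by_contra hred
        exact hblue ⟨x, y, hxy, hred⟩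

theorem ramseyProp_copies_top_two [Fintype V] (G : SimpleGraph V) (k : ℕ) :
    ramseyProp G (copies k (⊤ : SimpleGraph (Fin 2))) (2 * k + Fintype.card V) :=
  ramseyProp_iff.2 fun red =>
    isContained_or_copies_top_two_isContained_compl G k red (by simp)

theorem ramseyProp_fan_of_induce_ne [Fintype V] (G : SimpleGraph V) (v : V) {k N₁ N₂ N : ℕ}
    (h₁ : ramseyProp (G.induce {w | w ≠ v}) (fan k) N₁)
    (h₂ : ramseyProp G (copies k (⊤ : SimpleGraph (Fin 2))) N₂) (hN₁ : N₁ ≤ N)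
    (hN : (G.neighborSet v).ncard * (N₂ - 1) + Fintype.card V ≤ N) :
    ramseyProp G (fan k) N := by
  classical
  refine ramseyProp_iff.2 fun red => ?_
  obtain hG | hfan := h₁.isContained_or (by simpa using hN₁) red
  swap
  · exact Or.inr hfan
  obtain ⟨f⟩ := hG
  by_cases hext : ∃ u, (∀ x, f x ≠ u) ∧ ∀ x : {w | w ≠ v}, G.Adj v x → red.Adj u (f x)
  · obtain ⟨u, hu, hadj⟩ := hext
    exact Or.inl (isContained_of_copy_induce_ne f hu hadj)
  set U : Finset (Fin N) := (univ.image f)ᶜ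
  have hU : ∀ u ∈ U, ∃ d ∈ G.neighborFinset v, ∃ hd : d ≠ v, ¬red.Adj u (f ⟨d, hd⟩) := by
    intro u hu
    by_contra! h
    refine hext ⟨u, fun x hx => by simp [U, ← hx] at hu, fun x hx => ?_⟩
    exact h x ((mem_neighborFinset _ _ _).2 hx) x.2
  have hUcard : #(G.neighborFinset v) * (N₂ - 1) < #U := by
    have hcard : #(univ.image f) = Fintype.card V - 1 := by
      rw [card_image_of_injective univ (f := ⇑f) f.injective, card_univ, Set.card_ne_eq]
    have hV : 0 < Fintype.card V := Fintype.card_pos_iff.2 ⟨v⟩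
    rw [← coe_neighborFinset, Set.ncard_coe_finset] at hN
    rw [card_compl, hcard, Fintype.card_fin]
    omega
  obtain ⟨d, hd, hT⟩ := exists_lt_card_filter_of_forall_exists hU hUcard
  have hdv : d ≠ v := ((mem_neighborFinset _ _ _).1 hd).ne'
  refine (h₂.isContained_or_induce red (Nat.le_of_pred_lt hT)).imp_right
    (fan_isContained_of_subset_neighborSet (w := f ⟨d, hdv⟩) fun u hu => ?_)
  obtain ⟨huU, _, hred⟩ := mem_filter.1 hu
  simp only [U, mem_compl, mem_image, mem_univ, true_and, not_exists] at huU
  exact ⟨fun h => huU _ h, fun h => hred h.symm⟩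

theorem ramseyProp_ramseyNumber (h : ∃ N, ramseyProp G H N) :
    ramseyProp G H (ramseyNumber G H) :=
  Nat.sInf_mem h

theorem exists_ramseyProp_fan [Fintype V] (G : SimpleGraph V) (k : ℕ) :
    ∃ N, ramseyProp G (fan k) N := by
  classical
  induction hn : Fintype.card V generalizing V with
  | zero =>
    have := Fintype.card_eq_zero_iff.1 hn
    exact ⟨0, ramseyProp_iff.2 fun _ => Or.inl IsContained.of_isEmpty⟩
  | succ n ih =>
    obtain ⟨v⟩ := Fintype.card_pos_iff (α := V).1 (by omega)
    obtain ⟨N₁, h₁⟩ := ih (G.induce {w | w ≠ v}) (by rw [Set.card_ne_eq, hn, n.add_sub_cancel])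
    exact ⟨_, ramseyProp_fan_of_induce_ne G v h₁ (ramseyProp_copies_top_two G k)
      (le_max_left _ _) (le_max_right _ _)⟩

end

theorem ramsey_fan_recursive_general {V : Type*} [Fintype V] (n k : ℕ)
    (G : SimpleGraph V) (hcard : Fintype.card V = n)
    (v : V) :
    ramseyNumber G (fan k) ≤
      max (ramseyNumber (G.induce {w : V | w ≠ v}) (fan k))
        ((G.neighborSet v).ncard *
            (ramseyNumber G (copies k (⊤ : SimpleGraph (Fin 2))) - 1) + n) := by
  classical
  subst hcard
  exact Nat.sInf_le <| ramseyProp_fan_of_induce_ne G v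
    (ramseyProp_ramseyNumber (exists_ramseyProp_fan _ k))
    (ramseyProp_ramseyNumber ⟨_, ramseyProp_copies_top_two G k⟩)
    (le_max_left _ _) (le_max_right _ _)

/-- The recursive bound from the proof of Lemma 9: for `v` a vertex of minimum degree `δ`,
`r(G, F_k) ≤ max{r(G − v, F_k), δ(r(G, kK₂) − 1) + n}`. -/
theorem ramsey_fan_recursive {V : Type*} [Fintype V] (n k : ℕ) (hk : 1 ≤ k) (hn : 2 ≤ n)
    (G : SimpleGraph V) (hcard : Fintype.card V = n)
    (hiso : ∀ v : V, ∃ w : V, G.Adj v w)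
    (v : V) (hv : ∀ w : V, (G.neighborSet v).ncard ≤ (G.neighborSet w).ncard) :
    ramseyNumber G (fan k) ≤
      max (ramseyNumber (G.induce {w : V | w ≠ v}) (fan k))
        ((G.neighborSet v).ncard *
            (ramseyNumber G (copies k (⊤ : SimpleGraph (Fin 2))) - 1) + n) :=
  ramsey_fan_recursive_general n k G hcard v
end

section
/- Let k ≥ 1 and t ≥ 2 be integers, let n ≥ max{12tk + 2k, 4tk^2}, and set N = 2n + t − 2. Suppose the edges of the complete graph K_N are colored red and blue so that there is no red copy of the star K_{1,n−1} and no blue copy of tF_k. Let A be the vertex set of a blue copy of (t−1)F_k in K_N and let S = V(K_N) \ A. Then for every vertex v ∈ S, the number of blue neighbors of v inside S satisfies n − 2kt + 2k ≤ |N_B(v) ∩ S| ≤ n + k − 2. -/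
open SimpleGraph

/-!
Every red degree is at most `n - 2` (a vertex of red degree `n - 1` is the centre of a red
`K_{1,n-1}`), so `v` has at least `n + t - 1` blue neighbours, of which at most
`|A| = (t - 1)(2k + 1)` lie in `A`; this is the lower bound.

If `v` had `n + k - 1` blue neighbours in `S`, each of them would have at least `k` blue
neighbours among them. A graph on at least `2k` vertices of minimum degree `k` has `k` disjoint
edges (a largest matching can be augmented through two unmatched vertices). These edges
together with `v` form a blue `F_k` inside `S`, which with the blue `(t - 1)F_k` on `A` is a blue
`tF_k`.
-/

open Function Finset

def copiesSnoc {V α : Type*} {m : ℕ} (f : Fin m × α → V) (g : α → V) : Fin (m + 1) × α → V :=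
  fun x => Fin.lastCases (g x.2) (fun i => f (i, x.2)) x.1

@[simp] theorem copiesSnoc_castSucc {V α : Type*} {m : ℕ} (f : Fin m × α → V) (g : α → V)
    (i : Fin m) (a : α) : copiesSnoc f g (i.castSucc, a) = f (i, a) := by
  simp [copiesSnoc]

@[simp] theorem copiesSnoc_last {V α : Type*} {m : ℕ} (f : Fin m × α → V) (g : α → V) (a : α) :
    copiesSnoc f g (Fin.last m, a) = g a := by
  simp [copiesSnoc]

theorem fan_adj_some_some {k : ℕ} {x y : Fin k × Fin 2} :
    (fan k).Adj (some x) (some y) ↔ (copies k (⊤ : SimpleGraph (Fin 2))).Adj x y := by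
  obtain ⟨i, a⟩ := x
  obtain ⟨j, b⟩ := y
  simp only [fan, copies, fromRel_adj, top_adj]
  grind

theorem copies_top_adj_iff {j : ℕ} {x y : Fin j × Fin 2} :
    (copies j (⊤ : SimpleGraph (Fin 2))).Adj x y ↔ y = (x.1, x.2.rev) := by
  obtain ⟨i, a⟩ := x
  obtain ⟨i', b⟩ := y
  simp only [copies, top_adj, Prod.mk.injEq]
  fin_cases a <;> fin_cases b <;> simp [eq_comm]

namespace SimpleGraph

variable {V : Type*}

section Degree

variable [Fintype V] (G : SimpleGraph V) [DecidableRel G.Adj]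

theorem degree_lt_of_not_containsCopy_star {m : ℕ}
    (h : ¬ G.ContainsCopy (completeBipartiteGraph (Fin 1) (Fin m))) (v : V) : G.degree v < m := by
  by_contra! hm
  let leaf : Fin m ↪ V := (Fin.castLEEmb hm).trans
    ((G.neighborFinset v).equivFin.symm.toEmbedding.trans (Embedding.subtype _))
  have hleaf (i : Fin m) : G.Adj v (leaf i) :=
    (G.mem_neighborFinset v _).mp ((G.neighborFinset v).equivFin.symm (Fin.castLE hm i)).2
  refine h ⟨Sum.elim (fun _ => v) leaf,
    (injective_of_subsingleton _).sumElim leaf.injective fun _ i => (hleaf i).ne, ?_⟩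
  rintro (_ | i) (_ | j) hij
  · simp at hij
  · exact hleaf j
  · exact (hleaf i).symm
  · simp at hij

theorem card_le_card_filter_compl_adj [DecidableEq V] (T : Finset V) (u : V) :
    #T ≤ #(T.filter (Gᶜ.Adj u)) + 1 + G.degree u := by
  calc #T ≤ #(T.filter (Gᶜ.Adj u) ∪ insert u (G.neighborFinset u)) := by
        refine card_le_card fun z hz => ?_
        by_cases hzu : u = z
        · simp [hzu]
        · by_cases hadj : G.Adj u z
          · simp [hadj]
          · simp [hz, compl_adj, hzu, hadj]
    _ ≤ #(T.filter (Gᶜ.Adj u)) + #(insert u (G.neighborFinset u)) := card_union_le _ _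
    _ ≤ #(T.filter (Gᶜ.Adj u)) + 1 + G.degree u := by
        rw [add_assoc, add_comm 1, ← card_neighborFinset_eq_degree]
        gcongr
        exact card_insert_le _ _

theorem degree_le_ncard_inter_compl_add_ncard (v : V) (A : Set V) :
    G.degree v ≤ (G.neighborSet v ∩ Aᶜ).ncard + A.ncard := by
  rw [← card_neighborFinset_eq_degree, neighborFinset, ← Set.ncard_eq_toFinset_card',
    ← Set.ncard_inter_add_ncard_sdiff_eq_ncard _ Aᶜ, Set.sdiff_compl]
  exact Nat.add_le_add_left (Set.ncard_inter_le_ncard_right _ _ (Set.toFinite _)) _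

end Degree

structure IsCopyOn {α : Type*} (G : SimpleGraph V) (H : SimpleGraph α) (T : Set V) (f : α → V) :
    Prop where
  injective : Injective f
  mem : ∀ a, f a ∈ T
  adj : ∀ ⦃a b⦄, H.Adj a b → G.Adj (f a) (f b)

namespace IsCopyOn

variable {α : Type*} {G : SimpleGraph V} {H : SimpleGraph α} {T T' : Set V} {f : α → V}

theorem mono (hf : G.IsCopyOn H T f) (hT : T ⊆ T') : G.IsCopyOn H T' f :=
  ⟨hf.injective, fun a => hT (hf.mem a), hf.adj⟩

theorem containsCopy (hf : G.IsCopyOn H T f) : G.ContainsCopy H :=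
  ⟨f, hf.injective, hf.adj⟩

theorem update [DecidableEq α] (hf : G.IsCopyOn H T f) {a : α} {u : V} (hu : u ∈ T)
    (hfresh : u ∉ Set.range f) (hadj : ∀ b, H.Adj a b → G.Adj u (f b)) :
    G.IsCopyOn H T (Function.update f a u) where
  injective b c hbc := by
    by_cases hb : b = a <;> by_cases hc : c = a
    · rw [hb, hc]
    · simp only [hb, update_self, update_of_ne hc] at hbc
      exact absurd ⟨c, hbc.symm⟩ hfresh
    · simp only [hc, update_self, update_of_ne hb] at hbc
      exact absurd ⟨b, hbc⟩ hfresh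
    · rw [update_of_ne hb, update_of_ne hc] at hbc
      exact hf.injective hbc
  mem b := by
    by_cases hb : b = a
    · simpa only [hb, update_self] using hu
    · simpa only [update_of_ne hb] using hf.mem b
  adj b c hbc := by
    by_cases hb : b = a <;> by_cases hc : c = a
    · exact absurd (hb.trans hc.symm) hbc.ne
    · subst hb; simpa only [update_self, update_of_ne hc] using hadj c hbc
    · subst hc; simpa only [update_self, update_of_ne hb] using (hadj b hbc.symm).symm
    · simpa only [update_of_ne hb, update_of_ne hc] using hf.adj hbc

theorem copiesSnoc {m : ℕ} {f : Fin m × α → V} {g : α → V}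
    (hf : G.IsCopyOn (copies m H) T f) (hg : G.IsCopyOn H T g) (hfg : ∀ a b, f a ≠ g b) :
    G.IsCopyOn (copies (m + 1) H) T (copiesSnoc f g) where
  injective := by
    rintro ⟨i, a⟩ ⟨j, b⟩ hab
    induction i using Fin.lastCases <;> induction j using Fin.lastCases <;>
      simp only [copiesSnoc_castSucc, copiesSnoc_last] at hab
    · rw [hg.injective hab]
    · exact absurd hab.symm (hfg _ _)
    · exact absurd hab (hfg _ _)
    · cases hf.injective hab; rfl
  mem := by
    rintro ⟨i, a⟩
    induction i using Fin.lastCases <;> simp [hf.mem, hg.mem]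
  adj := by
    rintro ⟨i, a⟩ ⟨j, b⟩ ⟨hij : i = j, hab : H.Adj a b⟩
    subst hij
    induction i using Fin.lastCases
    · simpa using hg.adj hab
    · simpa using hf.adj (show (copies m H).Adj (_, a) (_, b) from ⟨rfl, hab⟩)

theorem fan {k : ℕ} {p : Fin k × Fin 2 → V} (hp : G.IsCopyOn (copies k ⊤) T p) {v : V}
    (hv : ∀ x, G.Adj v (p x)) : G.IsCopyOn (fan k) (insert v T) (fun o => o.elim v p) where
  injective := by
    rintro (_ | x) (_ | y) hxy <;> simp only [Option.elim_none, Option.elim_some] at hxy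
    · rfl
    · exact absurd hxy (hv y).ne
    · exact absurd hxy.symm (hv x).ne
    · rw [hp.injective hxy]
  mem := by
    rintro (_ | x)
    · exact Set.mem_insert v T
    · exact Set.mem_insert_of_mem v (hp.mem x)
  adj := by
    rintro (_ | x) (_ | y) hxy
    · exact absurd hxy (SimpleGraph.irrefl _)
    · exact hv y
    · exact (hv x).symm
    · exact hp.adj (fan_adj_some_some.mp hxy)

end IsCopyOn

section Matching

variable {G : SimpleGraph V}

theorem isCopyOn_top_fin_two {T : Set V} {a b : V} (hab : G.Adj a b) (ha : a ∈ T) (hb : b ∈ T) :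
    G.IsCopyOn ⊤ T ![a, b] where
  injective := by
    intro c d hcd
    fin_cases c <;> fin_cases d <;> simp_all [hab.ne, hab.ne.symm]
  mem c := by fin_cases c <;> simpa
  adj c d hcd := by
    fin_cases c <;> fin_cases d <;> simp_all [hab.symm]

variable [DecidableRel G.Adj] {T : Finset V}

theorem card_filter_adj_le_card_filter_adj_comp {β : Type*} [Fintype β] {u : V} (q : β → V)
    (hq : ∀ z ∈ T, G.Adj u z → z ∈ Set.range q) :
    #(T.filter (G.Adj u)) ≤ #(univ.filter fun x => G.Adj u (q x)) := by
  classical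
  calc #(T.filter (G.Adj u)) ≤ #((univ.filter fun x => G.Adj u (q x)).image q) := by
        refine card_le_card fun z hz => ?_
        rw [mem_filter] at hz
        obtain ⟨x, rfl⟩ := hq z hz.1 hz.2
        simpa using ⟨x, hz.2, rfl⟩
    _ ≤ _ := card_image_le

/-- Pigeonhole: `u` and `w` have `2k > 2j` neighbours in total among the `2j` vertices of `p`. -/
theorem exists_adj_adj_rev {j k : ℕ} (hj : j < k) (p : Fin j × Fin 2 → V) {u w : V}
    (hu : k ≤ #(T.filter (G.Adj u))) (hw : k ≤ #(T.filter (G.Adj w)))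
    (hu' : ∀ z ∈ T, G.Adj u z → z ∈ Set.range p) (hw' : ∀ z ∈ T, G.Adj w z → z ∈ Set.range p) :
    ∃ x, G.Adj u (p x) ∧ G.Adj w (p (x.1, x.2.rev)) := by
  let rev : Fin j × Fin 2 ≃ Fin j × Fin 2 := (Equiv.refl _).prodCongr Fin.revPerm
  have hu'' := card_filter_adj_le_card_filter_adj_comp p hu'
  have hw'' := card_filter_adj_le_card_filter_adj_comp (p ∘ rev) fun z hz hwz => by
    obtain ⟨x, rfl⟩ := hw' z hz hwz
    exact ⟨rev.symm x, by simp⟩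
  obtain ⟨x, hx⟩ := inter_nonempty_of_card_lt_card_add_card
    (filter_subset (fun x => G.Adj u (p x)) univ)
    (filter_subset (fun x => G.Adj w (p (rev x))) univ)
    (by simp only [card_univ, Fintype.card_prod, Fintype.card_fin, comp_apply] at *; omega)
  simp only [mem_inter, mem_filter] at hx
  exact ⟨x, hx.1.2, hx.2.2⟩

variable [DecidableEq V] {k : ℕ}

/-- The augmenting step: if the vertices left uncovered by the `j` pairs span an edge, add it;
otherwise two uncovered vertices `u`, `w` are adjacent to opposite ends `p x`, `p x'` of one
pair, which is then replaced by the two pairs `u, p x` and `w, p x'`. -/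
theorem IsCopyOn.exists_copies_top_succ (hdeg : ∀ u ∈ T, k ≤ #(T.filter (G.Adj u)))
    (hcard : 2 * k ≤ #T) {j : ℕ} (hj : j < k) {p : Fin j × Fin 2 → V}
    (hp : G.IsCopyOn (copies j ⊤) T p) :
    ∃ q : Fin (j + 1) × Fin 2 → V, G.IsCopyOn (copies (j + 1) ⊤) T q := by
  set W := T \ univ.image p
  have hmemW (z : V) : z ∈ W ↔ z ∈ T ∧ z ∉ Set.range p := by simp [W]
  have hW : 1 < #W := by
    have : #(univ.image p) ≤ 2 * j := card_image_le.trans (by simp [mul_comm])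
    have : #T - #(univ.image p) ≤ #W := le_card_sdiff _ _
    omega
  by_cases hedge : ∃ a ∈ W, ∃ b ∈ W, G.Adj a b
  · obtain ⟨a, ha, b, hb, hab⟩ := hedge
    rw [hmemW] at ha hb
    refine ⟨_, hp.copiesSnoc (isCopyOn_top_fin_two hab ha.1 hb.1) fun x => ?_⟩
    exact Fin.forall_fin_two.mpr ⟨fun h => ha.2 ⟨x, h⟩, fun h => hb.2 ⟨x, h⟩⟩
  push Not at hedge
  obtain ⟨u, hu, w, hw, huw⟩ := one_lt_card.mp hW
  have hnbr : ∀ y ∈ W, ∀ z ∈ T, G.Adj y z → z ∈ Set.range p := fun y hy z hz hyz =>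
    by_contra fun hzp => hedge y hy z ((hmemW z).2 ⟨hz, hzp⟩) hyz
  obtain ⟨x, hux, hwx⟩ := exists_adj_adj_rev hj p (hdeg u ((hmemW u).1 hu).1)
    (hdeg w ((hmemW w).1 hw).1) (hnbr u hu) (hnbr w hw)
  rw [hmemW] at hu hw
  set x' : Fin j × Fin 2 := (x.1, x.2.rev)
  have hp' : G.IsCopyOn (copies j ⊤) T (Function.update p x' u) :=
    hp.update hu.1 hu.2 fun b hb => by
      obtain rfl : b = x := by simpa [x', copies_top_adj_iff] using hb
      exact hux
  refine ⟨_, hp'.copiesSnoc (isCopyOn_top_fin_two hwx hw.1 (hp.mem x')) fun y => ?_⟩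
  refine Fin.forall_fin_two.mpr ⟨?_, ?_⟩ <;> by_cases hy : y = x' <;>
    simp only [hy, update_self, update_of_ne, Matrix.cons_val_zero, Matrix.cons_val_one,
      Matrix.cons_val_fin_one, ne_eq, not_false_eq_true]
  · exact huw
  · exact fun h => hw.2 ⟨y, h⟩
  · exact fun h => hu.2 ⟨x', h.symm⟩
  · exact hp.injective.ne hy

theorem exists_isCopyOn_copies_top (hdeg : ∀ u ∈ T, k ≤ #(T.filter (G.Adj u)))
    (hcard : 2 * k ≤ #T) : ∃ p : Fin k × Fin 2 → V, G.IsCopyOn (copies k ⊤) T p := by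
  suffices ∀ j ≤ k, ∃ p : Fin j × Fin 2 → V, G.IsCopyOn (copies j ⊤) T p from this k le_rfl
  intro j hj
  induction j with
  | zero => exact ⟨fun x => x.1.elim0, fun x => x.1.elim0, fun x => x.1.elim0, fun x => x.1.elim0⟩
  | succ j ih =>
    obtain ⟨p, hp⟩ := ih (by omega)
    exact hp.exists_copies_top_succ hdeg hcard hj

end Matching

theorem exists_isCopyOn_compl_fan [Fintype V] [DecidableEq V] (G : SimpleGraph V)
    [DecidableRel G.Adj] {d k : ℕ} (hG : ∀ u, G.degree u ≤ d) {S : Set V} {v : V} (hv : v ∈ S)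
    (hd : d + 1 + k ≤ (Gᶜ.neighborSet v ∩ S).ncard) (hk : 2 * k ≤ (Gᶜ.neighborSet v ∩ S).ncard) :
    ∃ g : Option (Fin k × Fin 2) → V, Gᶜ.IsCopyOn (fan k) S g := by
  classical
  set T := (Gᶜ.neighborSet v ∩ S).toFinset
  have hT : (T : Set V) = Gᶜ.neighborSet v ∩ S := Set.coe_toFinset _
  have hT_card : #T = (Gᶜ.neighborSet v ∩ S).ncard := (Set.ncard_eq_toFinset_card' _).symm
  obtain ⟨p, hp⟩ := exists_isCopyOn_copies_top (G := Gᶜ) (T := T) (k := k)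
    (fun u _ => by have := G.card_le_card_filter_compl_adj T u; have := hG u; omega) (by omega)
  exact ⟨_, (hp.fan fun x => (hT ▸ hp.mem x).1).mono
    (Set.insert_subset hv fun z hz => (hT ▸ hz).2)⟩

end SimpleGraph

theorem blue_degree_in_S_general (k t n N : ℕ) (ht : 2 ≤ t)
    (hn1 : 12 * t * k + 2 * k ≤ n)
    (hN : N = 2 * n + t - 2)
    (R : SimpleGraph (Fin N))
    (hred : ¬ R.ContainsCopy (completeBipartiteGraph (Fin 1) (Fin (n - 1))))
    (hblue : ¬ (Rᶜ).ContainsCopy (copies t (fan k)))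
    (f : Fin (t - 1) × Option (Fin k × Fin 2) → Fin N)
    (hf_inj : Function.Injective f)
    (hf_adj : ∀ ⦃a b⦄, (copies (t - 1) (fan k)).Adj a b → (Rᶜ).Adj (f a) (f b))
    (A S : Set (Fin N)) (hA : A = Set.range f) (hS : S = Aᶜ) :
    ∀ v ∈ S,
      ((n : ℤ) - 2 * (k : ℤ) * (t : ℤ) + 2 * (k : ℤ) ≤ (((Rᶜ).neighborSet v ∩ S).ncard : ℤ)) ∧
      ((((Rᶜ).neighborSet v ∩ S).ncard : ℤ) ≤ (n : ℤ) + (k : ℤ) - 2) := by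
  classical
  subst hS
  intro v hv
  have hR (u : Fin N) : R.degree u + 2 ≤ n := by
    have := R.degree_lt_of_not_containsCopy_star hred u
    omega
  constructor
  · have hA_card : A.ncard = (t - 1) * (2 * k + 1) := by
      simp [hA, Set.ncard_range_of_injective hf_inj, mul_comm]
    have hblue_deg : n + t - 1 ≤ Rᶜ.degree v := by
      rw [degree_compl, Fintype.card_fin]
      have := hR v
      omega
    have := hblue_deg.trans (Rᶜ.degree_le_ncard_inter_compl_add_ncard v A)
    rw [hA_card] at this
    zify [(by omega : 1 ≤ t), (by omega : 1 ≤ n + t)] at this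
    linarith
  · by_contra! hbig
    obtain ⟨g, hg⟩ := R.exists_isCopyOn_compl_fan (k := k)
      (fun u => Nat.le_sub_of_add_le (hR u)) hv (by have := hR v; omega) (by omega)
    have hf : Rᶜ.IsCopyOn (copies (t - 1) (fan k)) Set.univ f :=
      ⟨hf_inj, fun _ => trivial, hf_adj⟩
    refine hblue (Nat.sub_add_cancel (by omega : 1 ≤ t) ▸ ?_)
    refine (hf.copiesSnoc (hg.mono (Set.subset_univ _)) fun a b hab => ?_).containsCopy
    exact hg.mem b (hab ▸ hA ▸ ⟨a, rfl⟩)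

/-- Claim 1 in the proof of Theorem 6: in a red-blue coloring of `K_N`, `N = 2n + t − 2`,
with no red `K_{1,n−1}` and no blue `tF_k`, if `A` is the vertex set of a blue `(t−1)F_k`
and `S` is its complement, then every `v ∈ S` has `n − 2kt + 2k ≤ |N_B(v) ∩ S| ≤ n + k − 2`. -/
theorem blue_degree_in_S (k t n N : ℕ) (hk : 1 ≤ k) (ht : 2 ≤ t)
    (hn1 : 12 * t * k + 2 * k ≤ n) (hn2 : 4 * t * k ^ 2 ≤ n)
    (hN : N = 2 * n + t - 2)
    (R : SimpleGraph (Fin N))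
    (hred : ¬ R.ContainsCopy (completeBipartiteGraph (Fin 1) (Fin (n - 1))))
    (hblue : ¬ (Rᶜ).ContainsCopy (copies t (fan k)))
    (f : Fin (t - 1) × Option (Fin k × Fin 2) → Fin N)
    (hf_inj : Function.Injective f)
    (hf_adj : ∀ ⦃a b⦄, (copies (t - 1) (fan k)).Adj a b → (Rᶜ).Adj (f a) (f b))
    (A S : Set (Fin N)) (hA : A = Set.range f) (hS : S = Aᶜ) :
    ∀ v ∈ S,
      ((n : ℤ) - 2 * (k : ℤ) * (t : ℤ) + 2 * (k : ℤ) ≤ (((Rᶜ).neighborSet v ∩ S).ncard : ℤ)) ∧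
      ((((Rᶜ).neighborSet v ∩ S).ncard : ℤ) ≤ (n : ℤ) + (k : ℤ) - 2) :=
  blue_degree_in_S_general k t n N ht hn1 hN R hred hblue f hf_inj hf_adj A S hA hS
end

section
/- Let k ≥ 1 and t ≥ 2 be integers, let n ≥ max{12tk + 2k, 4tk^2}, and set N = 2n + t − 2. Suppose the edges of the complete graph K_N are colored red and blue so that there is no red copy of the star K_{1,n−1} and no blue copy of tF_k. Let A be the vertex set of a blue copy of (t−1)F_k in K_N and let S = V(K_N) \ A. Then there exist two disjoint subsets Z_1 and Z_2 of S such that for each i ∈ {1,2}: the graph formed by the blue edges inside Z_i has at most 3(k−1) non-isolated vertices and maximum degree at most 2(k−1), and n − 2kt + k + 1 ≤ |Z_i| ≤ n + k − 2. -/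
open SimpleGraph

/-- The blue graph inside `Z` (with blue graph `Rᶜ`) has at most `3(k−1)` non-isolated
vertices and maximum degree at most `2(k−1)`. -/
def blueAlmostIndependent {N : ℕ} (R : SimpleGraph (Fin N)) (k : ℕ) (Z : Set (Fin N)) : Prop :=
  ({v ∈ Z | ∃ w ∈ Z, (Rᶜ).Adj v w}).ncard ≤ 3 * (k - 1) ∧
    ∀ v ∈ Z, (((Rᶜ).neighborSet v ∩ Z).ncard ≤ 2 * (k - 1))


/-!
Let `S` be the complement of the blue `(t-1)F_k`. As there is no red `K_{1,n-1}`, every `u ∈ S`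
has at least `n - 2k(t-1)` blue neighbours in `S`, and these span no blue matching with `k`
edges: together with `u` it would be a blue `F_k` disjoint from the `(t-1)F_k`.

Inside such a neighbourhood `W` take a maximum matching `M`, with `m < k` edges. The vertices
of `W` missed by `M` are independent, and for every edge of `M` one of its ends has at most one
unmatched neighbour, since otherwise the edge could be traded for two disjoint edges to
unmatched vertices. Keeping the unmatched vertices and one such end of each edge gives
`Z ⊆ W` with `|Z| = |W| - m` whose blue graph has at most `2m` non-isolated vertices and
maximum degree at most `m`.

Doing this for some `u₁ ∈ S` gives `Z₁`. It is large, so some `u₂ ∈ Z₁` is isolated in its blue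
graph, and doing it again for `u₂` gives `Z₂`, which lies in the blue neighbourhood of `u₂` and
therefore misses `Z₁`.
-/

open Function Set

lemma Set.ncard_range_le_card {α ι : Type*} [Fintype ι] (x : ι → α) :
    (range x).ncard ≤ Fintype.card ι :=
  Nat.card_eq_fintype_card (α := ι) ▸ Finite.card_range_le x

namespace SimpleGraph

variable {V α ι κ : Type*} {G : SimpleGraph V}

lemma ncard_neighborSet_lt_of_not_containsCopy_star [Finite V] {m : ℕ}
    (h : ¬ G.ContainsCopy (completeBipartiteGraph (Fin 1) (Fin m))) (v : V) :
    (G.neighborSet v).ncard < m := by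
  by_contra! hm
  have : Fintype (G.neighborSet v) := Fintype.ofFinite _
  obtain ⟨φ⟩ : Nonempty (Fin m ↪ G.neighborSet v) := Function.Embedding.nonempty_of_card_le
    (by rwa [Fintype.card_fin, ← Nat.card_eq_fintype_card, Nat.card_coe_set_eq])
  refine h ⟨Sum.elim (fun _ => v) (fun i => φ i), ?_, ?_⟩
  · exact injective_of_subsingleton _ |>.sumElim (Subtype.val_injective.comp φ.injective)
      fun _ i => G.ne_of_adj (φ i).2
  · rintro (a | a) (b | b) hab <;> simp at hab ⊢
    exacts [(φ b).2, (φ a).2.symm]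

lemma ncard_le_ncard_neighborSet_add_ncard_compl_neighborSet_inter [Finite V]
    (G : SimpleGraph V) (S : Set V) (u : V) :
    S.ncard ≤ 1 + (G.neighborSet u).ncard + (Gᶜ.neighborSet u ∩ S).ncard := by
  have hS : S ⊆ insert u (G.neighborSet u ∪ Gᶜ.neighborSet u ∩ S) := by
    intro x hx
    by_cases hxu : x = u
    · exact .inl hxu
    · by_cases hux : G.Adj u x
      · exact .inr (.inl hux)
      · exact .inr (.inr ⟨⟨Ne.symm hxu, hux⟩, hx⟩)
  calc S.ncard ≤ (insert u (G.neighborSet u ∪ Gᶜ.neighborSet u ∩ S)).ncard := ncard_le_ncard hS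
    _ ≤ (G.neighborSet u ∪ Gᶜ.neighborSet u ∩ S).ncard + 1 := ncard_insert_le _ _
    _ ≤ _ := by have := ncard_union_le (G.neighborSet u) (Gᶜ.neighborSet u ∩ S); omega

lemma exists_forall_not_adj_of_ncard_lt [Finite V] {Z : Set V}
    (h : {v ∈ Z | ∃ w ∈ Z, G.Adj v w}.ncard < Z.ncard) : ∃ v ∈ Z, ∀ w ∈ Z, ¬ G.Adj v w := by
  obtain ⟨v, hvZ, hv⟩ := exists_mem_notMem_of_ncard_lt_ncard h
  exact ⟨v, hvZ, fun w hwZ hvw => hv ⟨hvZ, w, hwZ, hvw⟩⟩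

lemma containsCopy_copies_succ {H : SimpleGraph α} {s : ℕ} {f : Fin s × α → V}
    (hf : Injective f) (hfG : ∀ ⦃a b⦄, (copies s H).Adj a b → G.Adj (f a) (f b))
    {g : α → V} (hg : Injective g) (hgG : ∀ ⦃a b⦄, H.Adj a b → G.Adj (g a) (g b))
    (hfg : Disjoint (range f) (range g)) : G.ContainsCopy (copies (s + 1) H) := by
  refine ⟨fun p => Fin.lastCases (g p.2) (fun i => f (i, p.2)) p.1, ?_, ?_⟩
  · rintro ⟨i, a⟩ ⟨j, b⟩ h
    induction i using Fin.lastCases <;> induction j using Fin.lastCases <;>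
      simp only [Fin.lastCases_last, Fin.lastCases_castSucc] at h
    · rw [hg h]
    · exact absurd h.symm (hfg.ne_of_mem ⟨_, rfl⟩ ⟨_, rfl⟩)
    · exact absurd h (hfg.ne_of_mem ⟨_, rfl⟩ ⟨_, rfl⟩)
    · cases hf h; rfl
  · rintro ⟨i, a⟩ ⟨j, b⟩ ⟨rfl : i = j, hab⟩
    induction i using Fin.lastCases
    · simpa using hgG hab
    · simpa using hfG (a := (_, a)) (b := (_, b)) ⟨rfl, hab⟩

section Sparse

variable [Finite V] [Fintype ι] {I : Set V} {x : ι → V}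

/-- Only the `x i` and their neighbours in `I` can be non-isolated. -/
lemma ncard_nonisolated_union_range_le (hI : ∀ a ∈ I, ∀ b ∈ I, ¬ G.Adj a b)
    (hx : ∀ i, (G.neighborSet (x i) ∩ I).Subsingleton) :
    {v ∈ I ∪ range x | ∃ w ∈ I ∪ range x, G.Adj v w}.ncard ≤ 2 * Fintype.card ι := by
  have hsub : {v ∈ I ∪ range x | ∃ w ∈ I ∪ range x, G.Adj v w} ⊆
      range x ∪ ⋃ i, G.neighborSet (x i) ∩ I := by
    rintro v ⟨hv | hv, w, hw | ⟨i, rfl⟩, hvw⟩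
    · exact absurd hvw (hI v hv w hw)
    · exact .inr (mem_iUnion.2 ⟨i, hvw.symm, hv⟩)
    · exact .inl hv
    · exact .inl hv
  have hunion : (⋃ i, G.neighborSet (x i) ∩ I).ncard ≤ Fintype.card ι :=
    calc _ ≤ ∑ i, (G.neighborSet (x i) ∩ I).ncard := ncard_iUnion_le_of_fintype _
      _ ≤ ∑ _i : ι, 1 := Finset.sum_le_sum fun i _ => ncard_le_one_iff_subsingleton.2 (hx i)
      _ = Fintype.card ι := by simp
  calc _ ≤ (range x ∪ ⋃ i, G.neighborSet (x i) ∩ I).ncard := ncard_le_ncard hsub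
    _ ≤ (range x).ncard + (⋃ i, G.neighborSet (x i) ∩ I).ncard := ncard_union_le _ _
    _ ≤ 2 * Fintype.card ι := by have := ncard_range_le_card x; omega

lemma ncard_neighborSet_inter_union_range_le (hI : ∀ a ∈ I, ∀ b ∈ I, ¬ G.Adj a b)
    (hx : ∀ i, (G.neighborSet (x i) ∩ I).Subsingleton) :
    ∀ v ∈ I ∪ range x, (G.neighborSet v ∩ (I ∪ range x)).ncard ≤ Fintype.card ι := by
  rintro v (hv | ⟨i, rfl⟩)
  · have hsub : G.neighborSet v ∩ (I ∪ range x) ⊆ range x := by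
      rintro w ⟨hvw, hw | hw⟩
      · exact absurd hvw (hI v hv w hw)
      · exact hw
    exact (ncard_le_ncard hsub).trans (ncard_range_le_card x)
  · have hsub : G.neighborSet (x i) ∩ (I ∪ range x) ⊆
        (range x \ {x i}) ∪ (G.neighborSet (x i) ∩ I) := by
      rintro w ⟨hw, hwI | hwx⟩
      · exact .inr ⟨hw, hwI⟩
      · exact .inl ⟨hwx, (G.ne_of_adj hw).symm⟩
    have hdiff := ncard_sdiff_singleton_of_mem (mem_range_self (f := x) i)
    have hrange := ncard_range_le_card x
    have hone := ncard_le_one_iff_subsingleton.2 (hx i)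
    have hpos : 0 < (range x).ncard := (ncard_pos).2 ⟨_, mem_range_self i⟩
    calc _ ≤ _ := ncard_le_ncard hsub
      _ ≤ _ := ncard_union_le _ _
      _ ≤ Fintype.card ι := by omega

end Sparse

/-- `e` lists the edges `e (i, 0) e (i, 1)`, `i : ι`, of a matching of `G` inside `W`. -/
structure IsMatchingIn (G : SimpleGraph V) (W : Set V) (e : ι × Fin 2 → V) : Prop where
  injective : Injective e
  range_subset : range e ⊆ W
  adj : ∀ i, G.Adj (e (i, 0)) (e (i, 1))

namespace IsMatchingIn

variable {W W' : Set V} {e : ι × Fin 2 → V}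

lemma mono (he : G.IsMatchingIn W e) (hW : W ⊆ W') : G.IsMatchingIn W' e :=
  ⟨he.injective, he.range_subset.trans hW, he.adj⟩

lemma adj_of_ne (he : G.IsMatchingIn W e) (i : ι) {a b : Fin 2} (hab : a ≠ b) :
    G.Adj (e (i, a)) (e (i, b)) := by
  fin_cases a <;> fin_cases b
  exacts [absurd rfl hab, he.adj i, (he.adj i).symm, absurd rfl hab]

lemma comp_prodMap (he : G.IsMatchingIn W e) (σ : κ ≃ ι) :
    G.IsMatchingIn W (e ∘ Prod.map σ id) where
  injective := he.injective.comp (σ.injective.prodMap injective_id)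
  range_subset := (range_comp_subset_range _ _).trans he.range_subset
  adj i := he.adj (σ i)

lemma of_isEmpty [IsEmpty ι] : G.IsMatchingIn W (isEmptyElim : ι × Fin 2 → V) where
  injective p := isEmptyElim p
  range_subset := by rintro _ ⟨p, -⟩; exact isEmptyElim p
  adj i := isEmptyElim i

lemma addEdge (he : G.IsMatchingIn W e) {a b : V} (ha : a ∈ W \ range e) (hb : b ∈ W \ range e)
    (hab : G.Adj a b) :
    G.IsMatchingIn W (fun p : Option ι × Fin 2 => p.1.elim (![a, b] p.2) fun i => e (i, p.2)) where
  injective := by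
    have hne : ∀ c i d, ![a, b] c ≠ e (i, d) := fun c i d h => by
      fin_cases c
      exacts [ha.2 ⟨_, h.symm⟩, hb.2 ⟨_, h.symm⟩]
    rintro ⟨_ | i, c⟩ ⟨_ | j, d⟩ h
    · fin_cases c <;> fin_cases d <;> simp_all [hab.ne, hab.ne.symm]
    · exact absurd h (hne c j d)
    · exact absurd h.symm (hne d i c)
    · cases he.injective h; rfl
  range_subset := by
    rintro _ ⟨⟨_ | i, c⟩, rfl⟩
    · fin_cases c
      exacts [ha.1, hb.1]
    · exact he.range_subset ⟨_, rfl⟩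
  adj
    | none => hab
    | some i => he.adj i

lemma update [DecidableEq ι] (he : G.IsMatchingIn W e) (i : ι) {a : V} (ha : a ∈ W \ range e)
    (hadj : G.Adj (e (i, 0)) a) : G.IsMatchingIn W (update e (i, 1) a) where
  injective p q h := by
    by_cases hp : p = (i, 1) <;> by_cases hq : q = (i, 1)
    · rw [hp, hq]
    · subst hp
      rw [update_self, update_of_ne hq] at h
      exact absurd ⟨q, h.symm⟩ ha.2
    · subst hq
      rw [update_self, update_of_ne hp] at h
      exact absurd ⟨p, h⟩ ha.2
    · rw [update_of_ne hp, update_of_ne hq] at h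
      exact he.injective h
  range_subset := by
    rintro _ ⟨p, rfl⟩
    by_cases hp : p = (i, 1)
    · simpa [hp] using ha.1
    · simpa [hp] using he.range_subset ⟨p, rfl⟩
  adj j := by
    by_cases hj : j = i
    · subst hj
      simpa using hadj
    · simpa [hj] using he.adj j

section Maximum

variable (he : G.IsMatchingIn W e) (hmax : ∀ e' : Option ι × Fin 2 → V, ¬ G.IsMatchingIn W e')
include he hmax

lemma not_adj_of_maximum : ∀ a ∈ W \ range e, ∀ b ∈ W \ range e, ¬ G.Adj a b :=
  fun _ ha _ hb hab => hmax _ (he.addEdge ha hb hab)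

/-- Otherwise `e (i, 0)` has an unmatched neighbour `a` and `e (i, 1)` one `b ≠ a`, and the edge
`i` could be traded for the two edges `e (i, 0) a` and `e (i, 1) b`. -/
lemma exists_subsingleton_of_maximum (i : ι) :
    ∃ c, (G.neighborSet (e (i, c)) ∩ (W \ range e)).Subsingleton := by
  classical
  by_contra! h
  obtain ⟨b, hb, hbW⟩ := (h 1).nonempty
  obtain ⟨a, ⟨ha, haW⟩, hab⟩ := (h 0).exists_ne b
  have hnot : ∀ {y}, y ≠ a → (∀ p ≠ (i, 1), e p ≠ y) → y ∉ range (Function.update e (i, 1) a) := by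
    rintro y hya hy ⟨p, hp⟩
    by_cases hpi : p = (i, 1)
    · subst hpi
      exact hya (by simpa using hp.symm)
    · exact hy p hpi (by simpa [hpi] using hp)
  refine hmax _ ((he.update i haW ha).addEdge (a := e (i, 1))
    ⟨he.range_subset ⟨_, rfl⟩, hnot ?_ ?_⟩ ⟨hbW.1, hnot hab.symm fun p _ hp => hbW.2 ⟨p, hp⟩⟩ hb)
  · rintro rfl
    exact haW.2 ⟨_, rfl⟩
  · exact fun p hp h => hp (he.injective h)

lemma exists_sparse_subset_of_maximum [Finite V] [Fintype ι] :
    ∃ Z ⊆ W, Z.ncard + Fintype.card ι = W.ncard ∧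
      {v ∈ Z | ∃ w ∈ Z, G.Adj v w}.ncard ≤ 2 * Fintype.card ι ∧
      ∀ v ∈ Z, (G.neighborSet v ∩ Z).ncard ≤ Fintype.card ι := by
  choose c hc using he.exists_subsingleton_of_maximum hmax
  have hI := he.not_adj_of_maximum hmax
  have hxe : range (fun i => e (i, c i)) ⊆ range e := range_comp_subset_range _ e
  refine ⟨(W \ range e) ∪ range (fun i => e (i, c i)),
    union_subset sdiff_subset (hxe.trans he.range_subset), ?_,
    ncard_nonisolated_union_range_le hI hc, ncard_neighborSet_inter_union_range_le hI hc⟩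
  have hdisj : Disjoint (W \ range e) (range fun i => e (i, c i)) :=
    disjoint_sdiff_left.mono_right hxe
  have hx : (range fun i => e (i, c i)).ncard = Fintype.card ι := by
    rw [ncard_range_of_injective fun i j h => congrArg Prod.fst (he.injective h),
      Nat.card_eq_fintype_card]
  have he2 : (range e).ncard = 2 * Fintype.card ι := by
    rw [ncard_range_of_injective he.injective, Nat.card_eq_fintype_card]
    simp [mul_comm]
  have hle := ncard_le_ncard he.range_subset
  rw [ncard_union_eq hdisj, ncard_sdiff he.range_subset, hx, he2]
  omega

end Maximum

variable {u : V}

lemma injective_optionElim (he : G.IsMatchingIn (G.neighborSet u) e) :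
    Injective fun a : Option (ι × Fin 2) => a.elim u e
  | none, none, _ => rfl
  | none, some q, h => absurd h (G.ne_of_adj (he.range_subset ⟨q, rfl⟩))
  | some p, none, h => absurd h.symm (G.ne_of_adj (he.range_subset ⟨p, rfl⟩))
  | some _, some _, h => congrArg some (he.injective h)

lemma fan_adj {k : ℕ} {e : Fin k × Fin 2 → V} (he : G.IsMatchingIn (G.neighborSet u) e)
    ⦃a b : Option (Fin k × Fin 2)⦄ (hab : (fan k).Adj a b) : G.Adj (a.elim u e) (b.elim u e) := by
  have key : ∀ a b : Option (Fin k × Fin 2), a ≠ b →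
      (a = none ∨ ∃ i c d, a = some (i, c) ∧ b = some (i, d)) → G.Adj (a.elim u e) (b.elim u e)
  · rintro a (_ | q) hne (rfl | ⟨i, c, d, rfl, h⟩)
    · exact absurd rfl hne
    · exact absurd h (Option.some_ne_none _).symm
    · exact he.range_subset ⟨q, rfl⟩
    · cases h
      exact he.adj_of_ne i fun hcd => hne (by rw [hcd])
  rw [fan, fromRel_adj] at hab
  rcases hab with ⟨hne, h | h⟩
  exacts [key a b hne h, (key b a hne.symm h).symm]

end IsMatchingIn

lemma exists_sparse_subset_of_forall_not_isMatchingIn [Finite V] {W : Set V} {m : ℕ}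
    (hW : ∀ e : Fin (m + 1) × Fin 2 → V, ¬ G.IsMatchingIn W e) :
    ∃ Z ⊆ W, W.ncard ≤ Z.ncard + m ∧ {v ∈ Z | ∃ w ∈ Z, G.Adj v w}.ncard ≤ 2 * m ∧
      ∀ v ∈ Z, (G.neighborSet v ∩ Z).ncard ≤ m := by
  classical
  let P j := ∃ e : Fin j × Fin 2 → V, G.IsMatchingIn W e
  have hm := Nat.findGreatest_le (P := P) m
  have hP : P (Nat.findGreatest P m) := Nat.findGreatest_spec (Nat.zero_le _) ⟨_, .of_isEmpty⟩
  have hP' : ¬ P (Nat.findGreatest P m + 1) := by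
    rcases Nat.lt_or_ge m (Nat.findGreatest P m + 1) with h | h
    · rw [show Nat.findGreatest P m = m by omega]
      exact fun ⟨e, he⟩ => hW e he
    · exact Nat.findGreatest_is_greatest (Nat.lt_succ_self _) h
  obtain ⟨e, he⟩ := hP
  obtain ⟨Z, hZW, hZ, hnoniso, hdeg⟩ := he.exists_sparse_subset_of_maximum
    fun e' he' => hP' ⟨_, he'.comp_prodMap (finSuccEquiv _)⟩
  rw [Fintype.card_fin] at hZ hnoniso hdeg
  exact ⟨Z, hZW, by omega, by omega, fun v hv => (hdeg v hv).trans hm⟩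

lemma not_isMatchingIn_neighborSet_sdiff_range {s k : ℕ} {f : Fin s × Option (Fin k × Fin 2) → V}
    (hG : ¬ G.ContainsCopy (copies (s + 1) (fan k))) (hf : Injective f)
    (hfG : ∀ ⦃a b⦄, (copies s (fan k)).Adj a b → G.Adj (f a) (f b)) {u : V} (hu : u ∉ range f)
    (e : Fin k × Fin 2 → V) : ¬ G.IsMatchingIn (G.neighborSet u \ range f) e := fun he =>
  hG <| containsCopy_copies_succ hf hfG (he.mono sdiff_subset).injective_optionElim
    (he.mono sdiff_subset).fan_adj <| disjoint_right.2 <| by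
      rintro _ ⟨_ | p, rfl⟩
      exacts [hu, (he.range_subset ⟨p, rfl⟩).2]

end SimpleGraph

open SimpleGraph

section Ramsey

variable {N k s : ℕ} {R : SimpleGraph (Fin N)} {f : Fin s × Option (Fin k × Fin 2) → Fin N}

lemma ncard_compl_range_add (hf : Injective f) : (range f)ᶜ.ncard + (2 * k * s + s) = N := by
  have h := ncard_add_ncard_compl (range f)
  rw [ncard_range_of_injective hf, Nat.card_eq_fintype_card, Nat.card_eq_fintype_card] at h
  simp only [Fintype.card_prod, Fintype.card_fin, Fintype.card_option] at h
  linarith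

lemma sub_le_ncard_compl_neighborSet_sdiff_range {n : ℕ} (hN : N = 2 * n + (s + 1) - 2)
    (hred : ¬ R.ContainsCopy (completeBipartiteGraph (Fin 1) (Fin (n - 1)))) (hf : Injective f)
    (u : Fin N) : n - 2 * k * s ≤ (Rᶜ.neighborSet u \ range f).ncard := by
  have hdeg := ncard_neighborSet_lt_of_not_containsCopy_star hred u
  have hS := R.ncard_le_ncard_neighborSet_add_ncard_compl_neighborSet_inter (range f)ᶜ u
  have hcompl := ncard_compl_range_add hf
  rw [← sdiff_eq] at hS
  omega

lemma exists_blueAlmostIndependent_subset {w : ℕ} (hk : 1 ≤ k)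
    (hblue : ¬ Rᶜ.ContainsCopy (copies (s + 1) (fan k))) (hf : Injective f)
    (hfR : ∀ ⦃a b⦄, (copies s (fan k)).Adj a b → Rᶜ.Adj (f a) (f b)) {u : Fin N}
    (hu : u ∉ range f) (hw : w ≤ (Rᶜ.neighborSet u \ range f).ncard) :
    ∃ Z ⊆ Rᶜ.neighborSet u \ range f,
      blueAlmostIndependent R k Z ∧ w ≤ Z.ncard + (k - 1) ∧ Z.ncard ≤ w := by
  obtain ⟨W, hW, rfl⟩ := exists_subset_card_eq hw
  have hmatch : ∀ e : Fin (k - 1 + 1) × Fin 2 → Fin N, ¬ Rᶜ.IsMatchingIn W e := by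
    rw [Nat.sub_add_cancel hk]
    exact fun e he => not_isMatchingIn_neighborSet_sdiff_range hblue hf hfR hu e (he.mono hW)
  obtain ⟨Z, hZW, hZ, hnoniso, hdeg⟩ := exists_sparse_subset_of_forall_not_isMatchingIn hmatch
  exact ⟨Z, hZW.trans hW, ⟨by omega, fun v hv => (hdeg v hv).trans (by omega)⟩, hZ,
    ncard_le_ncard hZW⟩

end Ramsey

theorem exists_Z1_Z2_general (k t n N : ℕ) (hk : 1 ≤ k) (ht : 2 ≤ t)
    (hn1 : 12 * t * k + 2 * k ≤ n)
    (hN : N = 2 * n + t - 2)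
    (R : SimpleGraph (Fin N))
    (hred : ¬ R.ContainsCopy (completeBipartiteGraph (Fin 1) (Fin (n - 1))))
    (hblue : ¬ (Rᶜ).ContainsCopy (copies t (fan k)))
    (f : Fin (t - 1) × Option (Fin k × Fin 2) → Fin N)
    (hf_inj : Function.Injective f)
    (hf_adj : ∀ ⦃a b⦄, (copies (t - 1) (fan k)).Adj a b → (Rᶜ).Adj (f a) (f b))
    (A S : Set (Fin N)) (hA : A = Set.range f) (hS : S = Aᶜ) :
    ∃ Z₁ Z₂ : Set (Fin N), Z₁ ⊆ S ∧ Z₂ ⊆ S ∧ Disjoint Z₁ Z₂ ∧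
      blueAlmostIndependent R k Z₁ ∧ blueAlmostIndependent R k Z₂ ∧
      ((n : ℤ) - 2 * (k : ℤ) * (t : ℤ) + (k : ℤ) + 1 ≤ (Z₁.ncard : ℤ) ∧
        (Z₁.ncard : ℤ) ≤ (n : ℤ) + (k : ℤ) - 2) ∧
      ((n : ℤ) - 2 * (k : ℤ) * (t : ℤ) + (k : ℤ) + 1 ≤ (Z₂.ncard : ℤ) ∧
        (Z₂.ncard : ℤ) ≤ (n : ℤ) + (k : ℤ) - 2) := by
  obtain ⟨s, rfl⟩ : ∃ s, t = s + 1 := ⟨t - 1, by omega⟩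
  subst hA hS
  have hn : 2 * k * s + 4 * k ≤ n := by nlinarith
  -- `f` is indexed by `Fin (s + 1 - 1)`; `(s := s)` keeps the counts below in terms of `s`.
  have hZ u (hu : u ∉ range f) := exists_blueAlmostIndependent_subset hk hblue hf_inj hf_adj hu
    (sub_le_ncard_compl_neighborSet_sdiff_range (s := s) hN hred hf_inj u)
  have hsize (z : ℕ) (hlo : n - 2 * k * s ≤ z + (k - 1)) (hhi : z ≤ n - 2 * k * s) :
      (n : ℤ) - 2 * k * ((s + 1 : ℕ) : ℤ) + k + 1 ≤ z ∧ (z : ℤ) ≤ n + k - 2 := by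
    zify [hk, (by omega : 2 * k * s ≤ n)] at hlo hhi
    push_cast
    constructor <;> nlinarith
  obtain ⟨u₁, hu₁⟩ : (range f)ᶜ.Nonempty :=
    nonempty_of_ncard_ne_zero (by have := ncard_compl_range_add (s := s) hf_inj; omega)
  obtain ⟨Z₁, hZ₁, hZ₁ai, hZ₁lo, hZ₁hi⟩ := hZ u₁ hu₁
  obtain ⟨u₂, hu₂, hu₂iso⟩ := exists_forall_not_adj_of_ncard_lt (hZ₁ai.1.trans_lt (by omega))
  obtain ⟨Z₂, hZ₂, hZ₂ai, hZ₂lo, hZ₂hi⟩ := hZ u₂ (hZ₁ hu₂).2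
  exact ⟨Z₁, Z₂, hZ₁.trans (sdiff_subset_compl _ _), hZ₂.trans (sdiff_subset_compl _ _),
    disjoint_left.2 fun a ha₁ ha₂ => hu₂iso a ha₁ (hZ₂ ha₂).1, hZ₁ai, hZ₂ai,
    hsize _ hZ₁lo hZ₁hi, hsize _ hZ₂lo hZ₂hi⟩

/-- Claim 2 in the proof of Theorem 6: there are disjoint `Z₁, Z₂ ⊆ S` such that for each
`i`, the blue graph inside `Zᵢ` has at most `3(k−1)` non-isolated vertices and maximum
degree at most `2(k−1)`, and `n − 2kt + k + 1 ≤ |Zᵢ| ≤ n + k − 2`. -/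
theorem exists_Z1_Z2 (k t n N : ℕ) (hk : 1 ≤ k) (ht : 2 ≤ t)
    (hn1 : 12 * t * k + 2 * k ≤ n) (hn2 : 4 * t * k ^ 2 ≤ n)
    (hN : N = 2 * n + t - 2)
    (R : SimpleGraph (Fin N))
    (hred : ¬ R.ContainsCopy (completeBipartiteGraph (Fin 1) (Fin (n - 1))))
    (hblue : ¬ (Rᶜ).ContainsCopy (copies t (fan k)))
    (f : Fin (t - 1) × Option (Fin k × Fin 2) → Fin N)
    (hf_inj : Function.Injective f)
    (hf_adj : ∀ ⦃a b⦄, (copies (t - 1) (fan k)).Adj a b → (Rᶜ).Adj (f a) (f b))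
    (A S : Set (Fin N)) (hA : A = Set.range f) (hS : S = Aᶜ) :
    ∃ Z₁ Z₂ : Set (Fin N), Z₁ ⊆ S ∧ Z₂ ⊆ S ∧ Disjoint Z₁ Z₂ ∧
      blueAlmostIndependent R k Z₁ ∧ blueAlmostIndependent R k Z₂ ∧
      ((n : ℤ) - 2 * (k : ℤ) * (t : ℤ) + (k : ℤ) + 1 ≤ (Z₁.ncard : ℤ) ∧
        (Z₁.ncard : ℤ) ≤ (n : ℤ) + (k : ℤ) - 2) ∧
      ((n : ℤ) - 2 * (k : ℤ) * (t : ℤ) + (k : ℤ) + 1 ≤ (Z₂.ncard : ℤ) ∧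
        (Z₂.ncard : ℤ) ≤ (n : ℤ) + (k : ℤ) - 2) :=
  exists_Z1_Z2_general k t n N hk ht hn1 hN R hred hblue f hf_inj hf_adj A S hA hS
end
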